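/- arXiv:2105.08451 — 5 statements merged into one kernel-verified Lean document; each statement's English description precedes it below -/
import Mathlib

section
/- Suppose that for every x ∈ ℝ^p, K(x, t) → 0 as |t| → ∞. Then the lagged covariances of the Lévy-dynamic spatio-temporal process converge to zero as the temporal lag tends to infinity: for all fixed s₁, s₂ ∈ ℝ^p and all sequences (t₁(n))_{n∈ℕ}, (t₂(n))_{n∈ℕ} of real numbers with |t₁(n) − t₂(n)| → ∞, one has Cov(f(s₁, t₁(n)), f(s₂, t₂(n))) → 0 as n → ∞. -/
/-!
Each value of the field is a random sum `∑_{j < N} Y_j` whose length `N` is independent of the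
summands. Cauchy–Schwarz on the sum, `(∑_{j<n} y_j)² ≤ n ∑_{j<n} y_j²`, followed by independence
gives `E f(s,t)² ≤ E[N²] · E[(K(M s - μ, t - τ) β)²]`, where `(M s - μ, β)` has the same law for
every summand and every time. By dominated convergence the second factor is bounded and tends
to `0` as `|t - τ| → ∞`. Finally `|Cov(X, Y)| ≤ 2 √(E X² · E Y²)`, and a large lag `|t₁ - t₂|`
forces one of `|t₁ - τ|`, `|t₂ - τ|` to be large.
-/

open MeasureTheory ProbabilityTheory Filter

noncomputable def covar {Ω : Type*} [MeasurableSpace Ω] (P : Measure Ω) (X Y : Ω → ℝ) : ℝ :=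
  (∫ ω, X ω * Y ω ∂P) - (∫ ω, X ω ∂P) * ∫ ω, Y ω ∂P

open scoped ENNReal NNReal Topology
open Finset

lemma enorm_sum_sq_le_card_mul_sum_enorm_sq {ι E : Type*} [NormedAddCommGroup E] (s : Finset ι)
    (f : ι → E) : ‖∑ i ∈ s, f i‖ₑ ^ 2 ≤ #s * ∑ i ∈ s, ‖f i‖ₑ ^ 2 := by
  calc ‖∑ i ∈ s, f i‖ₑ ^ 2 ≤ (∑ i ∈ s, ‖f i‖ₑ) ^ 2 := pow_le_pow_left' (enorm_sum_le _ _) 2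
    _ ≤ #s * ∑ i ∈ s, ‖f i‖ₑ ^ 2 := by
      simp only [enorm_eq_nnnorm]
      exact_mod_cast sq_sum_le_card_mul_sum_sq (s := s) (f := fun i => ‖f i‖₊)

lemma tsum_ite_lt_eq_sum_range {α : Type*} [AddCommMonoid α] [TopologicalSpace α] (n : ℕ)
    (f : ℕ → α) : ∑' j, (if j < n then f j else 0) = ∑ j ∈ range n, f j := by
  rw [tsum_eq_sum (s := range n) fun j hj => if_neg (by simpa using hj)]
  exact sum_congr rfl fun j hj => if_pos (mem_range.1 hj)

lemma measurable_sum_range {Ω β : Type*} [MeasurableSpace Ω] [AddCommMonoid β]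
    [MeasurableSpace β] [MeasurableAdd₂ β] {N : Ω → ℕ} {Y : ℕ → Ω → β} (hN : Measurable N)
    (hY : ∀ j, Measurable (Y j)) : Measurable fun ω => ∑ j ∈ range (N ω), Y j ω :=
  (measurable_from_prod_countable_right (f := fun q : ℕ × Ω => ∑ j ∈ range q.1, Y j q.2)
    fun n => Finset.measurable_sum (range n) fun j _ => hY j).comp (hN.prodMk measurable_id)

theorem lintegral_enorm_mul_sq_le {α : Type*} [MeasurableSpace α] (ρ : Measure α) {F g : α → ℝ}
    {C : ℝ} (hFC : ∀ x, ‖F x‖ ≤ C) :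
    ∫⁻ x, ‖F x * g x‖ₑ ^ 2 ∂ρ ≤ ENNReal.ofReal C ^ 2 * ∫⁻ x, ‖g x‖ₑ ^ 2 ∂ρ := by
  rw [← lintegral_const_mul' _ _ (by finiteness)]
  refine lintegral_mono fun x => ?_
  rw [enorm_mul, mul_pow, ← ofReal_norm]
  gcongr
  exact hFC x

theorem tendsto_lintegral_enorm_mul_sq {ι α : Type*} [MeasurableSpace α] {l : Filter ι}
    [l.IsCountablyGenerated] {ρ : Measure α} {F : ι → α → ℝ} {g : α → ℝ}
    (hF : ∀ i, Measurable (F i)) (hg : AEMeasurable g ρ) {C : ℝ} (hFC : ∀ i x, ‖F i x‖ ≤ C)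
    (hF0 : ∀ x, Tendsto (F · x) l (𝓝 0)) (hg2 : ∫⁻ x, ‖g x‖ₑ ^ 2 ∂ρ ≠ ∞) :
    Tendsto (fun i => ∫⁻ x, ‖F i x * g x‖ₑ ^ 2 ∂ρ) l (𝓝 0) := by
  have hbound : ∀ i x, ‖F i x * g x‖ₑ ^ 2 ≤ ENNReal.ofReal C ^ 2 * ‖g x‖ₑ ^ 2 := fun i x => by
    rw [enorm_mul, mul_pow, ← ofReal_norm (F i x)]
    gcongr
    exact hFC i x
  simpa using tendsto_lintegral_filter_of_dominated_convergence' (f := 0) _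
    (.of_forall fun i => ((hF i).aemeasurable.mul hg).enorm.pow_const 2)
    (.of_forall fun i => .of_forall (hbound i))
    (by rw [lintegral_const_mul'' _ (hg.enorm.pow_const 2)]; finiteness)
    (.of_forall fun x => by simpa [enorm_pow] using (((hF0 x).mul_const (g x)).pow 2).enorm)

theorem tendsto_mul_comp_of_tendsto_abs_sub {ι : Type*} {l : Filter ι} {f g : ℝ → ℝ}
    {u v : ι → ℝ} {C : ℝ} (hf : Tendsto f (comap abs atTop) (𝓝 0))
    (hg : Tendsto g (comap abs atTop) (𝓝 0)) (hfC : ∀ x, ‖f x‖ ≤ C) (hgC : ∀ x, ‖g x‖ ≤ C)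
    (huv : Tendsto (fun i => |u i - v i|) l atTop) :
    Tendsto (fun i => f (u i) * g (v i)) l (𝓝 0) := by
  have hl : l ≤ comap (fun i => |u i|) atTop ⊔ comap (fun i => |v i|) atTop := by
    refine ((atTop_basis.comap _).sup (atTop_basis.comap _)).ge_iff.2 fun R _ => ?_
    filter_upwards [huv.eventually_ge_atTop (R.1 + R.2)] with i hi
    by_contra h
    simp only [Set.mem_union, Set.mem_preimage, Set.mem_Ici, not_or, not_le] at h
    linarith [abs_sub (u i) (v i)]
  refine (tendsto_sup.2 ⟨?_, ?_⟩).mono_left hl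
  · exact (hf.comp (tendsto_comap_iff.2 tendsto_comap)).zero_mul_isBoundedUnder_le
      (isBoundedUnder_of ⟨C, fun i => hgC (v i)⟩)
  · exact isBoundedUnder_le_mul_tendsto_zero (isBoundedUnder_of ⟨C, fun i => hfC (u i)⟩)
      (hg.comp (tendsto_comap_iff.2 tendsto_comap))

namespace ProbabilityTheory

variable {Ω : Type*} [MeasurableSpace Ω] {μ : Measure Ω}

theorem IndepFun.indepFun_prodMk_of_indepFun {α β γ : Type*} [MeasurableSpace α]
    [MeasurableSpace β] [MeasurableSpace γ] [IsFiniteMeasure μ] {X : Ω → α} {Y : Ω → β}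
    {W : Ω → γ} (hXYW : IndepFun X (fun ω => (Y ω, W ω)) μ) (hX : Measurable X)
    (hY : Measurable Y) (hW : Measurable W) (hYW : IndepFun Y W μ) :
    IndepFun Y (fun ω => (X ω, W ω)) μ := by
  have hXW : IndepFun X W μ := hXYW.comp measurable_id measurable_snd
  rw [indepFun_iff_map_prod_eq_prod_map_map hY.aemeasurable (hX.prodMk hW).aemeasurable]
  refine Measure.ext_prod₃ fun {s t u} hs ht hu => ?_
  rw [Measure.map_apply (hY.prodMk (hX.prodMk hW)) (hs.prod (ht.prod hu)), Measure.prod_prod,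
    Measure.map_apply hY hs, Measure.map_apply (hX.prodMk hW) (ht.prod hu)]
  have hXYW' := hXYW.measure_inter_preimage_eq_mul t (s ×ˢ u) ht (hs.prod hu)
  have hYW' := hYW.measure_inter_preimage_eq_mul s u hs hu
  have hXW' := hXW.measure_inter_preimage_eq_mul t u ht hu
  simp only [Set.mk_preimage_prod] at hXYW' hYW' hXW' ⊢
  rw [Set.inter_left_comm, hXYW', hYW', hXW']
  ring

theorem lintegral_enorm_sum_range_sq_le {E : Type*} [NormedAddCommGroup E] [MeasurableSpace E]
    [OpensMeasurableSpace E] {N : Ω → ℕ} {Y : ℕ → Ω → E} (hN : Measurable N)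
    (hY : ∀ j, Measurable (Y j)) (hNY : ∀ j, IndepFun N (Y j) μ) {c : ℝ≥0∞}
    (hc : ∀ j, ∫⁻ ω, ‖Y j ω‖ₑ ^ 2 ∂μ ≤ c) :
    ∫⁻ ω, ‖∑ j ∈ range (N ω), Y j ω‖ₑ ^ 2 ∂μ ≤ (∫⁻ ω, (N ω : ℝ≥0∞) ^ 2 ∂μ) * c := by
  -- `n ∑_{j<n} y_j² = ∑' j, w j n * y_j²`, and each term factorizes since `N ⟂ Y j`
  set w : ℕ → ℕ → ℝ≥0∞ := fun j n => if j < n then (n : ℝ≥0∞) else 0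
  have hw : ∀ j, Measurable fun ω => w j (N ω) := fun j =>
    (measurable_from_top (f := w j)).comp hN
  have hY2 : ∀ j, Measurable fun ω => ‖Y j ω‖ₑ ^ 2 := fun j => (hY j).enorm.pow_const 2
  calc ∫⁻ ω, ‖∑ j ∈ range (N ω), Y j ω‖ₑ ^ 2 ∂μ
      ≤ ∫⁻ ω, ∑' j, w j (N ω) * ‖Y j ω‖ₑ ^ 2 ∂μ := by
        refine lintegral_mono fun ω => (enorm_sum_sq_le_card_mul_sum_enorm_sq _ _).trans_eq ?_
        simp only [w, ite_mul, zero_mul, tsum_ite_lt_eq_sum_range, card_range, mul_sum]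
    _ = ∑' j, (∫⁻ ω, w j (N ω) ∂μ) * ∫⁻ ω, ‖Y j ω‖ₑ ^ 2 ∂μ := by
        rw [lintegral_tsum (f := fun j ω => w j (N ω) * ‖Y j ω‖ₑ ^ 2)
          fun j => ((hw j).mul (hY2 j)).aemeasurable]
        refine tsum_congr fun j => lintegral_mul_eq_lintegral_mul_lintegral_of_indepFun''
          (hw j).aemeasurable (hY2 j).aemeasurable
          ((hNY j).comp (measurable_from_top (f := w j)) (measurable_enorm.pow_const 2))
    _ ≤ ∑' j, (∫⁻ ω, w j (N ω) ∂μ) * c := by gcongr with j; exact hc j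
    _ = (∫⁻ ω, (N ω : ℝ≥0∞) ^ 2 ∂μ) * c := by
        rw [ENNReal.tsum_mul_right, ← lintegral_tsum fun j => (hw j).aemeasurable]
        congr 2 with ω
        simp only [w, tsum_ite_lt_eq_sum_range, sum_const, card_range, nsmul_eq_mul, sq]

open Nat in
lemma lintegral_sq_poissonMeasure_ne_top (r : ℝ≥0) :
    ∫⁻ n, (n : ℝ≥0∞) ^ 2 ∂poissonMeasure r ≠ ∞ := by
  have hint : Integrable (fun n : ℕ => (n : ℝ) ^ 2) (poissonMeasure r) := by
    refine integrable_poissonMeasure_iff.2 <| .of_nonneg_of_le (fun n => by positivity)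
      (fun n => ?_) ((Real.summable_pow_div_factorial (4 * r)).mul_left (Real.exp (-r)))
    have hn : (n : ℝ) ^ 2 ≤ 4 ^ n := by
      have : (n : ℝ) ≤ 2 ^ n := by exact_mod_cast n.lt_two_pow_self.le
      calc (n : ℝ) ^ 2 ≤ (2 ^ n) ^ 2 := by gcongr
        _ = 4 ^ n := by rw [← pow_mul, mul_comm, pow_mul]; norm_num
    rw [Real.norm_of_nonneg (by positivity)]
    calc Real.exp (-r) * r ^ n / n ! * (n : ℝ) ^ 2 = Real.exp (-r) * (r ^ n * n ^ 2 / n !) := by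
          ring
      _ ≤ Real.exp (-r) * (r ^ n * 4 ^ n / n !) := by gcongr
      _ = Real.exp (-r) * ((4 * r) ^ n / n !) := by rw [mul_pow]; ring
  simpa using hint.2.ne

lemma abs_integral_mul_le_sqrt {X Y : Ω → ℝ} (hX : AEMeasurable X μ) (hY : AEMeasurable Y μ)
    (hX2 : ∫⁻ ω, ‖X ω‖ₑ ^ 2 ∂μ ≠ ∞) (hY2 : ∫⁻ ω, ‖Y ω‖ₑ ^ 2 ∂μ ≠ ∞) :
    |∫ ω, X ω * Y ω ∂μ| ≤
      √((∫⁻ ω, ‖X ω‖ₑ ^ 2 ∂μ).toReal * (∫⁻ ω, ‖Y ω‖ₑ ^ 2 ∂μ).toReal) := by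
  have hHolder := ENNReal.lintegral_mul_le_Lp_mul_Lq μ Real.HolderConjugate.two_two
    hX.enorm hY.enorm
  simp only [Pi.mul_apply, ENNReal.rpow_two] at hHolder
  rw [← Real.norm_eq_abs, Real.sqrt_mul ENNReal.toReal_nonneg, Real.sqrt_eq_rpow,
    Real.sqrt_eq_rpow, ENNReal.toReal_rpow, ENNReal.toReal_rpow, ← ENNReal.toReal_mul]
  refine (norm_integral_le_lintegral_norm _).trans (ENNReal.toReal_mono (by finiteness) ?_)
  simpa only [ofReal_norm, enorm_mul] using hHolder

lemma abs_covar_le [IsProbabilityMeasure μ] {X Y : Ω → ℝ} (hX : AEMeasurable X μ)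
    (hY : AEMeasurable Y μ) (hX2 : ∫⁻ ω, ‖X ω‖ₑ ^ 2 ∂μ ≠ ∞) (hY2 : ∫⁻ ω, ‖Y ω‖ₑ ^ 2 ∂μ ≠ ∞) :
    |covar μ X Y| ≤ 2 * √((∫⁻ ω, ‖X ω‖ₑ ^ 2 ∂μ).toReal * (∫⁻ ω, ‖Y ω‖ₑ ^ 2 ∂μ).toReal) := by
  have hmean : ∀ {X : Ω → ℝ}, AEMeasurable X μ → ∫⁻ ω, ‖X ω‖ₑ ^ 2 ∂μ ≠ ∞ →
      |∫ ω, X ω ∂μ| ≤ √(∫⁻ ω, ‖X ω‖ₑ ^ 2 ∂μ).toReal := fun hX hX2 => by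
    simpa using abs_integral_mul_le_sqrt hX aemeasurable_const hX2 (Y := fun _ => 1) (by simp)
  rw [covar]
  calc _ ≤ |∫ ω, X ω * Y ω ∂μ| + |∫ ω, X ω ∂μ| * |∫ ω, Y ω ∂μ| :=
        (abs_sub _ _).trans_eq (by rw [abs_mul])
    _ ≤ √((∫⁻ ω, ‖X ω‖ₑ ^ 2 ∂μ).toReal * (∫⁻ ω, ‖Y ω‖ₑ ^ 2 ∂μ).toReal)
          + √(∫⁻ ω, ‖X ω‖ₑ ^ 2 ∂μ).toReal * √(∫⁻ ω, ‖Y ω‖ₑ ^ 2 ∂μ).toReal := by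
        gcongr
        exacts [abs_integral_mul_le_sqrt hX hY hX2 hY2, hmean hX hX2, hmean hY hY2]
    _ = _ := by rw [← Real.sqrt_mul ENNReal.toReal_nonneg]; ring

theorem tendsto_covar_of_lintegral_sq_le [IsProbabilityMeasure μ] {ι : Type*} {l : Filter ι}
    {X Y : ι → Ω → ℝ} {a b : ι → ℝ≥0∞} (hX : ∀ i, AEMeasurable (X i) μ)
    (hY : ∀ i, AEMeasurable (Y i) μ) (hXa : ∀ i, ∫⁻ ω, ‖X i ω‖ₑ ^ 2 ∂μ ≤ a i)
    (hYb : ∀ i, ∫⁻ ω, ‖Y i ω‖ₑ ^ 2 ∂μ ≤ b i) (ha : ∀ i, a i ≠ ∞) (hb : ∀ i, b i ≠ ∞)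
    (hab : Tendsto (fun i => (a i).toReal * (b i).toReal) l (𝓝 0)) :
    Tendsto (fun i => covar μ (X i) (Y i)) l (𝓝 0) := by
  have hbound : Tendsto (fun i => 2 * √((a i).toReal * (b i).toReal)) l (𝓝 0) := by
    simpa only [Function.comp_def, Real.sqrt_zero, mul_zero] using
      ((Real.continuous_sqrt.tendsto 0).comp hab).const_mul 2
  refine squeeze_zero_norm (fun i => ?_) hbound
  rw [Real.norm_eq_abs]
  refine (abs_covar_le (hX i) (hY i) ((hXa i).trans_lt (ha i).lt_top).ne
    ((hYb i).trans_lt (hb i).lt_top).ne).trans ?_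
  gcongr
  exacts [ha i, hXa i, hb i, hYb i]

end ProbabilityTheory

section LevyDynamic

variable {Ω E : Type*} [MeasurableSpace Ω] [AddGroup E] [MeasurableSpace E] [MeasurableSub₂ E]

noncomputable def levyField (N : ℝ → Ω → ℕ) (Z : ℕ → Ω → ℝ → E × ℝ) (M : Ω → E → E)
    (K : E → ℝ → ℝ) (τ : ℝ) (s : E) (t : ℝ) (ω : Ω) : ℝ :=
  ∑ j ∈ range (N t ω), K (M ω s - (Z j ω t).1) (t - τ) * (Z j ω t).2

noncomputable def levySecondMomentBound (P : Measure Ω) (lam : ℝ≥0) (Z : ℕ → Ω → ℝ → E × ℝ)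
    (M : Ω → E → E) (K : E → ℝ → ℝ) (s : E) (u : ℝ) : ℝ≥0∞ :=
  (∫⁻ n, (n : ℝ≥0∞) ^ 2 ∂poissonMeasure lam) *
    ∫⁻ z, ‖K z.1 u * z.2‖ₑ ^ 2 ∂P.map (fun ω => (M ω s - (Z 0 ω 0).1, (Z 0 ω 0).2))

variable {P : Measure Ω} {lam : ℝ≥0} {N : ℝ → Ω → ℕ} {Z : ℕ → Ω → ℝ → E × ℝ} {M : Ω → E → E}
  {K : E → ℝ → ℝ}

theorem lintegral_enorm_levyField_sq_le [IsFiniteMeasure P] (τ : ℝ)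
    (hNmeas : ∀ t, Measurable (N t)) (hNpois : ∀ t, P.map (N t) = poissonMeasure lam)
    (hZmeas : ∀ j, Measurable (Z j)) (hZident : ∀ j, P.map (Z j) = P.map (Z 0))
    (hNZ : IndepFun (fun ω t => N t ω) (fun ω j => Z j ω) P)
    (hstat : ∀ t₁ t₂ : ℝ, P.map (fun ω => Z 0 ω t₁) = P.map (fun ω => Z 0 ω t₂))
    (hMmeas : Measurable M) (hMindep : IndepFun M (fun ω => ((fun t => N t ω), fun j => Z j ω)) P)
    (hKmeas : Measurable (Function.uncurry K)) (s : E) (t : ℝ) :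
    ∫⁻ ω, ‖levyField N Z M K τ s t ω‖ₑ ^ 2 ∂P ≤ levySecondMomentBound P lam Z M K s (t - τ) := by
  have hNf : Measurable fun ω t => N t ω := measurable_pi_lambda _ hNmeas
  have hZf : Measurable fun ω j => Z j ω := measurable_pi_lambda _ hZmeas
  have hN_MZ : IndepFun (fun ω t => N t ω) (fun ω => (M ω, fun j => Z j ω)) P :=
    hMindep.indepFun_prodMk_of_indepFun hMmeas hNf hZf hNZ
  have hsummand : Measurable fun q : E × E × ℝ => K (q.1 - q.2.1) (t - τ) * q.2.2 :=
    (hKmeas.comp ((measurable_fst.sub (measurable_fst.comp measurable_snd)).prodMk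
      measurable_const)).mul (measurable_snd.comp measurable_snd)
  have hpair : ∀ j, Measurable fun q : (E → E) × (ℕ → ℝ → E × ℝ) => (q.1 s, q.2 j t) :=
    fun j => (measurable_pi_apply s).comp measurable_fst |>.prodMk
      ((measurable_pi_apply t).comp ((measurable_pi_apply j).comp measurable_snd))
  have hlaw : ∀ j, IdentDistrib (fun ω => (M ω s, Z j ω t)) (fun ω => (M ω s, Z 0 ω 0)) P P := by
    intro j
    have hZjt : IdentDistrib (fun ω => Z j ω t) (fun ω => Z 0 ω 0) P P :=
      (IdentDistrib.comp ⟨(hZmeas j).aemeasurable, (hZmeas 0).aemeasurable, hZident j⟩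
        (measurable_pi_apply t)).trans ⟨by fun_prop, by fun_prop, hstat t 0⟩
    have hMZ : ∀ i u, IndepFun (fun ω => M ω s) (fun ω => Z i ω u) P := fun i u =>
      hMindep.comp (measurable_pi_apply s) ((measurable_pi_apply u).comp
        ((measurable_pi_apply i).comp measurable_snd))
    exact (IdentDistrib.refl (by fun_prop)).prodMk hZjt (hMZ j t) (hMZ 0 0)
  have hF : Measurable fun z : E × ℝ => ‖K z.1 (t - τ) * z.2‖ₑ ^ 2 :=
    ((hKmeas.comp (measurable_fst.prodMk measurable_const)).mul measurable_snd).enorm.pow_const 2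
  rw [levySecondMomentBound, ← hNpois t, lintegral_map (by fun_prop) (hNmeas t)]
  refine lintegral_enorm_sum_range_sq_le (hNmeas t)
    (fun j => hsummand.comp ((hpair j).comp (hMmeas.prodMk hZf)))
    (fun j => hN_MZ.comp (measurable_pi_apply t) (hsummand.comp (hpair j))) (fun j => le_of_eq ?_)
  rw [lintegral_map hF (by fun_prop)]
  exact ((hlaw j).comp (hsummand.enorm.pow_const 2)).lintegral_eq

theorem levySecondMomentBound_le (hZ0meas : Measurable (Z 0)) (hMmeas : Measurable M) {C : ℝ}
    (hKC : ∀ x u, ‖K x u‖ ≤ C) (s : E) (u : ℝ) :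
    levySecondMomentBound P lam Z M K s u ≤ (∫⁻ n, (n : ℝ≥0∞) ^ 2 ∂poissonMeasure lam) *
      (ENNReal.ofReal C ^ 2 * ∫⁻ ω, ‖(Z 0 ω 0).2‖ₑ ^ 2 ∂P) := by
  rw [levySecondMomentBound, ← lintegral_map (f := fun z : E × ℝ => ‖z.2‖ₑ ^ 2) (by fun_prop)
    (by fun_prop : Measurable fun ω => (M ω s - (Z 0 ω 0).1, (Z 0 ω 0).2))]
  gcongr
  exact lintegral_enorm_mul_sq_le (F := fun z : E × ℝ => K z.1 u) _ fun z => hKC z.1 u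

theorem tendsto_levySecondMomentBound (hZ0meas : Measurable (Z 0)) (hMmeas : Measurable M)
    (hβ2 : ∫⁻ ω, ‖(Z 0 ω 0).2‖ₑ ^ 2 ∂P ≠ ∞) (hKmeas : Measurable (Function.uncurry K)) {C : ℝ}
    (hKC : ∀ x u, ‖K x u‖ ≤ C) (hK0 : ∀ x, Tendsto (K x) (comap abs atTop) (𝓝 0)) (s : E) :
    Tendsto (levySecondMomentBound P lam Z M K s) (comap abs atTop) (𝓝 0) := by
  have hlim := tendsto_lintegral_enorm_mul_sq
    (ρ := P.map fun ω => (M ω s - (Z 0 ω 0).1, (Z 0 ω 0).2))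
    (fun u => hKmeas.comp (measurable_fst.prodMk measurable_const)) measurable_snd.aemeasurable
    (fun u z => hKC z.1 u) (fun z => hK0 z.1) (by rwa [lintegral_map (by fun_prop) (by fun_prop)])
  have h := ENNReal.Tendsto.const_mul hlim (Or.inr (lintegral_sq_poissonMeasure_ne_top lam))
  rwa [mul_zero] at h

end LevyDynamic

theorem levyDynamic_cov_tendsto_zero_of_time_lag_general
    {Ω : Type*} [MeasurableSpace Ω] (P : Measure Ω) [IsProbabilityMeasure P]
    (p : ℕ)
    (lam : NNReal) (τ : ℝ) (CK : ℝ)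
    -- the Poisson counts
    (N : ℝ → Ω → ℕ) (hNmeas : ∀ t, Measurable (N t))
    (hNpois : ∀ t, P.map (N t) = poissonMeasure lam)
    -- the i.i.d. copies (over j) of the (ℝ^p × ℝ)-valued process (μ_{j,·}, β_{j,·})
    (Z : ℕ → Ω → ℝ → (Fin p → ℝ) × ℝ) (hZmeas : ∀ j, Measurable (Z j))
    (hZident : ∀ j, P.map (Z j) = P.map (Z 0))
    -- the family (Z j)_j is independent of the family (N t)_t
    (hNZ : IndepFun (fun ω => fun t => N t ω) (fun ω => fun j => Z j ω) P)
    -- the law of the pair (μ_{0,t}, β_{0,t}) does not depend on t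
    (hstat : ∀ t₁ t₂ : ℝ,
      P.map (fun ω => Z 0 ω t₁) = P.map (fun ω => Z 0 ω t₂))
    -- β_{0,t} is square integrable
    (hβsq : ∀ t : ℝ, MemLp (fun ω => (Z 0 ω t).2) 2 P)
    -- the random map M, independent of all of the above
    (M : Ω → (Fin p → ℝ) → (Fin p → ℝ)) (hMmeas : Measurable M)
    (hMindep : IndepFun M
      (fun ω => ((fun t => N t ω), fun j => Z j ω)) P)
    -- the kernel K, measurable, uniformly bounded by CK
    (K : (Fin p → ℝ) → ℝ → ℝ) (hKmeas : Measurable (Function.uncurry K))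
    (hKbdd : ∀ x t, |K x t| ≤ CK)
    -- the hypothesis: K (x, t) → 0 as |t| → ∞, for every x
    (hK0 : ∀ x, Tendsto (fun t => K x t) (Filter.comap (fun t : ℝ => |t|) atTop) (nhds 0))
    -- the conclusion
    (s₁ s₂ : Fin p → ℝ) (t₁ t₂ : ℕ → ℝ)
    (hlag : Tendsto (fun n => |t₁ n - t₂ n|) atTop atTop) :
    Tendsto (fun n =>
      covar P
        (fun ω => ∑ j ∈ Finset.range (N (t₁ n) ω),
          K (M ω s₁ - (Z j ω (t₁ n)).1) (t₁ n - τ) * (Z j ω (t₁ n)).2)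
        (fun ω => ∑ j ∈ Finset.range (N (t₂ n) ω),
          K (M ω s₂ - (Z j ω (t₂ n)).1) (t₂ n - τ) * (Z j ω (t₂ n)).2))
      atTop (nhds 0) := by
  set A := levySecondMomentBound P lam Z M K
  have hKC : ∀ x u, ‖K x u‖ ≤ CK := fun x u => (Real.norm_eq_abs _).trans_le (hKbdd x u)
  have hβ2 : ∫⁻ ω, ‖(Z 0 ω 0).2‖ₑ ^ 2 ∂P ≠ ∞ := by
    simpa [enorm_pow] using (hβsq 0).integrable_sq.2.ne
  have hA_le := levySecondMomentBound_le (P := P) (lam := lam) (hZmeas 0) hMmeas hKC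
  set B := (∫⁻ n, (n : ℝ≥0∞) ^ 2 ∂poissonMeasure lam) *
      (ENNReal.ofReal CK ^ 2 * ∫⁻ ω, ‖(Z 0 ω 0).2‖ₑ ^ 2 ∂P)
  have hB : B ≠ ∞ := by finiteness [lintegral_sq_poissonMeasure_ne_top lam]
  have hA_ne_top : ∀ s u, A s u ≠ ∞ := fun s u => ne_top_of_le_ne_top hB (hA_le s u)
  have hA_bdd : ∀ s u, ‖(A s u).toReal‖ ≤ B.toReal := fun s u => by
    rw [Real.norm_of_nonneg ENNReal.toReal_nonneg]
    exact ENNReal.toReal_mono hB (hA_le s u)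
  have hA0 : ∀ s, Tendsto (fun u => (A s u).toReal) (comap abs atTop) (𝓝 0) := fun s => by
    have h := (ENNReal.tendsto_toReal ENNReal.zero_ne_top).comp <|
      tendsto_levySecondMomentBound (lam := lam) (hZmeas 0) hMmeas hβ2 hKmeas hKC hK0 s
    rwa [ENNReal.toReal_zero] at h
  have hmeas : ∀ s t, AEMeasurable (levyField N Z M K τ s t) P := fun s t =>
    (measurable_sum_range (hNmeas t) fun j => by fun_prop).aemeasurable
  have hfield := lintegral_enorm_levyField_sq_le τ hNmeas hNpois hZmeas hZident hNZ hstat hMmeas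
    hMindep hKmeas
  exact tendsto_covar_of_lintegral_sq_le (fun n => hmeas s₁ (t₁ n)) (fun n => hmeas s₂ (t₂ n))
    (fun n => hfield s₁ (t₁ n)) (fun n => hfield s₂ (t₂ n)) (fun n => hA_ne_top _ _)
    (fun n => hA_ne_top _ _) (tendsto_mul_comp_of_tendsto_abs_sub (hA0 s₁) (hA0 s₂) (hA_bdd s₁)
      (hA_bdd s₂) (by simpa only [sub_sub_sub_cancel_right] using hlag))

/-- **Lévy-dynamic process: lagged covariances vanish as the temporal lag tends to infinity.**
If `K x t → 0` as `|t| → ∞` for every `x`, then for fixed spatial points `s₁, s₂` and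
sequences of time points `t₁ n`, `t₂ n` with `|t₁ n - t₂ n| → ∞`, the covariance
`Cov (f (s₁, t₁ n), f (s₂, t₂ n)) → 0`, where
`f (s, t) = ∑_{j < N_t} K (M s - μ_{j,t}, t - τ) β_{j,t}`. -/
theorem levyDynamic_cov_tendsto_zero_of_time_lag
    {Ω : Type*} [MeasurableSpace Ω] (P : Measure Ω) [IsProbabilityMeasure P]
    (p : ℕ) (hp : 1 ≤ p)
    (lam : NNReal) (hlam : 0 < lam) (τ : ℝ) (CK : ℝ) (hCK : 0 < CK)
    -- the Poisson counts
    (N : ℝ → Ω → ℕ) (hNmeas : ∀ t, Measurable (N t))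
    (hNpois : ∀ t, P.map (N t) = poissonMeasure lam)
    (hNindep : iIndepFun (fun t : ℝ => N t) P)
    -- the i.i.d. copies (over j) of the (ℝ^p × ℝ)-valued process (μ_{j,·}, β_{j,·})
    (Z : ℕ → Ω → ℝ → (Fin p → ℝ) × ℝ) (hZmeas : ∀ j, Measurable (Z j))
    (hZindep : iIndepFun Z P)
    (hZident : ∀ j, P.map (Z j) = P.map (Z 0))
    -- the family (Z j)_j is independent of the family (N t)_t
    (hNZ : IndepFun (fun ω => fun t => N t ω) (fun ω => fun j => Z j ω) P)
    -- for each j, the β-process is independent of the μ-process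
    (hβμ : ∀ j, IndepFun (fun ω => fun t => (Z j ω t).2) (fun ω => fun t => (Z j ω t).1) P)
    -- the law of the pair (μ_{0,t}, β_{0,t}) does not depend on t
    (hstat : ∀ t₁ t₂ : ℝ,
      P.map (fun ω => Z 0 ω t₁) = P.map (fun ω => Z 0 ω t₂))
    -- β_{0,t} is square integrable
    (hβsq : ∀ t : ℝ, MemLp (fun ω => (Z 0 ω t).2) 2 P)
    -- the autocovariance of β depends only on the lag and vanishes at infinity
    (Cβ : ℝ → ℝ)
    (hCβ : ∀ t₁ t₂ : ℝ,
      covar P (fun ω => (Z 0 ω t₁).2) (fun ω => (Z 0 ω t₂).2) = Cβ |t₁ - t₂|)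
    (hCβ0 : Tendsto Cβ atTop (nhds 0))
    -- the random map M, independent of all of the above
    (M : Ω → (Fin p → ℝ) → (Fin p → ℝ)) (hMmeas : Measurable M)
    (hMindep : IndepFun M
      (fun ω => ((fun t => N t ω), fun j => Z j ω)) P)
    -- the kernel K, measurable, uniformly bounded by CK
    (K : (Fin p → ℝ) → ℝ → ℝ) (hKmeas : Measurable (Function.uncurry K))
    (hKbdd : ∀ x t, |K x t| ≤ CK)
    -- the hypothesis: K (x, t) → 0 as |t| → ∞, for every x
    (hK0 : ∀ x, Tendsto (fun t => K x t) (Filter.comap (fun t : ℝ => |t|) atTop) (nhds 0))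
    -- the conclusion
    (s₁ s₂ : Fin p → ℝ) (t₁ t₂ : ℕ → ℝ)
    (hlag : Tendsto (fun n => |t₁ n - t₂ n|) atTop atTop) :
    Tendsto (fun n =>
      covar P
        (fun ω => ∑ j ∈ Finset.range (N (t₁ n) ω),
          K (M ω s₁ - (Z j ω (t₁ n)).1) (t₁ n - τ) * (Z j ω (t₁ n)).2)
        (fun ω => ∑ j ∈ Finset.range (N (t₂ n) ω),
          K (M ω s₂ - (Z j ω (t₂ n)).1) (t₂ n - τ) * (Z j ω (t₂ n)).2))
      atTop (nhds 0) :=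
  levyDynamic_cov_tendsto_zero_of_time_lag_general P p lam τ CK N hNmeas hNpois Z hZmeas hZident hNZ
    hstat hβsq M hMmeas hMindep K hKmeas hKbdd hK0 s₁ s₂ t₁ t₂ hlag
end

section
/- Suppose that for every t ∈ ℝ, K(x, t) → 0 as ‖x‖ → ∞, and that M acts componentwise, M(ω, s) = (M₁(ω, s⁽¹⁾), …, M_p(ω, s⁽ᵖ⁾)), where for almost every ω each M_ℓ(ω, ·) : ℝ → ℝ is nondecreasing and M_ℓ(ω, x) → +∞ as x → +∞. Then for all fixed t₁, t₂ ∈ ℝ, every fixed s₂ ∈ ℝ^p, and every sequence (s₁(n))_{n∈ℕ} in ℝ^p for which at least one coordinate s₁(n)⁽ˡ⁾ tends to +∞, one has Cov(f(s₁(n), t₁), f(s₂, t₂)) → 0 as n → ∞. -/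
/-!
Each summand `K (M s₁ₙ - μ_j, t₁ - τ) β_j` tends to zero almost surely, since one coordinate of
`M s₁ₙ` tends to `+∞`; hence so does the finite random sum `f (s₁ₙ, t₁)`. Both `f (s₁ₙ, t₁)`
and `f (s₂, t₂)` are dominated by `C_K ∑_{j < N_t} |β_{j,t}|`, which is square integrable:
by Cauchy–Schwarz and the independence of `N_t` from the `β_j`, its second moment is at most
`E[N_t²] E[β_{0,t}²]`, and a Poisson count has a finite second moment. Dominated convergence
then sends both `E[f (s₁ₙ, t₁) f (s₂, t₂)]` and `E[f (s₁ₙ, t₁)]` to zero.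
-/

open MeasureTheory ProbabilityTheory Filter

open scoped ENNReal NNReal Topology

theorem memLp_two_iff_lintegral_enorm_sq_lt_top {Ω : Type*} [MeasurableSpace Ω] {P : Measure Ω}
    {f : Ω → ℝ} (hf : AEStronglyMeasurable f P) :
    MemLp f 2 P ↔ ∫⁻ ω, ‖f ω‖ₑ ^ 2 ∂P < ∞ := by
  simp only [memLp_two_iff_integrable_sq hf, Integrable, hasFiniteIntegral_iff_enorm, enorm_pow]
  exact and_iff_right (hf.pow 2)

theorem memLp_two_natCast_of_map_eq_poissonMeasure {Ω : Type*} [MeasurableSpace Ω]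
    {P : Measure Ω} {N : Ω → ℕ} {r : ℝ≥0} (hN : AEMeasurable N P)
    (hNpois : P.map N = poissonMeasure r) :
    MemLp (fun ω => (N ω : ℝ)) 2 P := by
  refine MemLp.comp_of_map (g := fun n : ℕ => (n : ℝ)) ?_ hN
  rw [hNpois, memLp_two_iff_integrable_sq (by fun_prop), integrable_poissonMeasure_iff]
  refine .of_nonneg_of_le (fun n => by positivity) (fun n => ?_)
    ((Real.summable_pow_div_factorial (4 * r)).mul_left (Real.exp (-r)))
  have hn : (n : ℝ) ^ 2 ≤ 4 ^ n := by
    have := (Nat.cast_le (α := ℝ)).2 n.lt_two_pow_self.le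
    push_cast at this
    calc (n : ℝ) ^ 2 ≤ (2 ^ n) ^ 2 := by gcongr
      _ = 4 ^ n := by rw [← pow_mul, mul_comm, pow_mul]; norm_num
  rw [Real.norm_of_nonneg (by positivity), mul_pow]
  calc Real.exp (-r) * r ^ n / n.factorial * (n : ℝ) ^ 2
      ≤ Real.exp (-r) * r ^ n / n.factorial * 4 ^ n := by gcongr
    _ = Real.exp (-r) * (4 ^ n * r ^ n / n.factorial) := by ring

theorem ProbabilityTheory.IndepFun.lintegral_comp_eq_lintegral_lintegral {Ω α β : Type*}
    [MeasurableSpace Ω] [MeasurableSpace α] [MeasurableSpace β] {P : Measure Ω} [IsFiniteMeasure P]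
    {X : Ω → α} {Y : Ω → β} (hXY : IndepFun X Y P) (hX : Measurable X) (hY : Measurable Y)
    {g : α × β → ℝ≥0∞} (hg : Measurable g) :
    ∫⁻ ω, g (X ω, Y ω) ∂P = ∫⁻ x, ∫⁻ ω, g (x, Y ω) ∂P ∂P.map X := by
  rw [← lintegral_map hg (hX.prodMk hY), hXY.map_prod_eq_prod_map_map hX.aemeasurable
    hY.aemeasurable, lintegral_prod _ hg.aemeasurable]
  refine lintegral_congr fun x => ?_
  exact lintegral_map (hg.comp measurable_prodMk_left) hY

section RandomSum

variable {Ω : Type*}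

def randomSum {E : Type*} [AddCommMonoid E] (N : Ω → ℕ) (X : ℕ → Ω → E) (ω : Ω) : E :=
  ∑ j ∈ Finset.range (N ω), X j ω

theorem abs_randomSum_mul_le {N : Ω → ℕ} {a b : ℕ → Ω → ℝ} {C : ℝ}
    (ha : ∀ j ω, |a j ω| ≤ C) (ω : Ω) :
    |randomSum N (fun j ω => a j ω * b j ω) ω| ≤ C * randomSum N (fun j ω => |b j ω|) ω :=
  calc _ ≤ ∑ j ∈ Finset.range (N ω), |a j ω * b j ω| := Finset.abs_sum_le_sum_abs _ _
    _ ≤ ∑ j ∈ Finset.range (N ω), C * |b j ω| := by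
      gcongr with j; rw [abs_mul]; gcongr; exact ha j ω
    _ = _ := (Finset.mul_sum _ _ _).symm

variable [MeasurableSpace Ω] {P : Measure Ω}

theorem measurable_randomSum {N : Ω → ℕ} {X : ℕ → Ω → ℝ} (hN : Measurable N)
    (hX : ∀ j, Measurable (X j)) : Measurable (randomSum N X) := by
  have h : Measurable fun q : Ω × ℕ => ∑ j ∈ Finset.range q.2, X j q.1 :=
    measurable_from_prod_countable_left fun n => by
      simpa using Finset.measurable_sum (Finset.range n) fun j _ => hX j
  exact h.comp (measurable_id.prodMk hN)

theorem memLp_two_randomSum [IsFiniteMeasure P] {N : Ω → ℕ} {X : ℕ → Ω → ℝ}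
    (hN : Measurable N) (hX : ∀ j, Measurable (X j))
    (hNX : IndepFun N (fun ω j => X j ω) P) (hident : ∀ j, IdentDistrib (X j) (X 0) P P)
    (hN2 : MemLp (fun ω => (N ω : ℝ)) 2 P) (hX2 : MemLp (X 0) 2 P) :
    MemLp (randomSum N X) 2 P := by
  rw [memLp_two_iff_lintegral_enorm_sq_lt_top (measurable_randomSum hN hX).aestronglyMeasurable]
  rw [memLp_two_iff_lintegral_enorm_sq_lt_top hN2.1] at hN2
  rw [memLp_two_iff_lintegral_enorm_sq_lt_top hX2.1] at hX2
  set m := ∫⁻ ω, ‖X 0 ω‖ₑ ^ 2 ∂P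
  set g : ℕ × (ℕ → ℝ) → ℝ≥0∞ := fun q => q.1 * ∑ j ∈ Finset.range q.1, ‖q.2 j‖ₑ ^ 2
  have hg : Measurable g := measurable_from_prod_countable_right fun n =>
    (Finset.measurable_sum (Finset.range n) fun j _ => by fun_prop).const_mul (n : ℝ≥0∞)
  have hCS : ∀ ω, ‖randomSum N X ω‖ₑ ^ 2 ≤ g (N ω, fun j => X j ω) := fun ω =>
    calc _ ≤ (∑ j ∈ Finset.range (N ω), ‖X j ω‖ₑ) ^ 2 := by gcongr; exact enorm_sum_le _ _
      _ ≤ _ := by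
        have := sq_sum_le_card_mul_sum_sq (s := Finset.range (N ω)) (f := fun j => ‖X j ω‖₊)
        rw [Finset.card_range] at this
        simp only [g, enorm_eq_nnnorm]
        exact_mod_cast this
  have hg_int : ∀ n : ℕ, ∫⁻ ω, g (n, fun j => X j ω) ∂P = (n : ℝ≥0∞) ^ 2 * m := by
    intro n
    have hXj : ∀ j, ∫⁻ ω, ‖X j ω‖ₑ ^ 2 ∂P = m := fun j =>
      ((hident j).comp (by fun_prop : Measurable fun x : ℝ => ‖x‖ₑ ^ 2)).lintegral_eq
    simp only [g]
    rw [lintegral_const_mul _ (by fun_prop), lintegral_finsetSum _ fun j _ => by fun_prop]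
    simp only [hXj, Finset.sum_const, Finset.card_range, nsmul_eq_mul]
    ring
  calc ∫⁻ ω, ‖randomSum N X ω‖ₑ ^ 2 ∂P ≤ ∫⁻ ω, g (N ω, fun j => X j ω) ∂P := lintegral_mono hCS
    _ = ∫⁻ n, (n : ℝ≥0∞) ^ 2 * m ∂P.map N := by
      rw [hNX.lintegral_comp_eq_lintegral_lintegral hN (measurable_pi_lambda _ hX) hg]
      simp_rw [hg_int]
    _ = (∫⁻ ω, ‖(N ω : ℝ)‖ₑ ^ 2 ∂P) * m := by
      rw [lintegral_map (by fun_prop) hN, lintegral_mul_const _ (by fun_prop)]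
      simp
    _ < ∞ := ENNReal.mul_lt_top hN2 hX2

end RandomSum

theorem tendsto_comap_norm_atTop_of_tendsto_apply {α ι : Type*} [Fintype ι] {l : Filter α}
    {x : α → ι → ℝ} {i : ι} (hx : Tendsto (fun a => x a i) l atTop) :
    Tendsto x l (comap (fun y : ι → ℝ => ‖y‖) atTop) :=
  tendsto_comap_iff.2 <| tendsto_atTop_mono
    (fun a => (Real.le_norm_self _).trans (norm_le_pi_norm (x a) i)) hx

theorem tendsto_covar_of_dominated {Ω : Type*} [MeasurableSpace Ω] {P : Measure Ω}
    [IsFiniteMeasure P] {F : ℕ → Ω → ℝ} {f Y G : Ω → ℝ}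
    (hF : ∀ n, AEStronglyMeasurable (F n) P) (hG : MemLp G 2 P) (hY : MemLp Y 2 P)
    (hFG : ∀ n, ∀ᵐ ω ∂P, |F n ω| ≤ G ω)
    (hlim : ∀ᵐ ω ∂P, Tendsto (fun n => F n ω) atTop (𝓝 (f ω))) :
    Tendsto (fun n => covar P (F n) Y) atTop (𝓝 (covar P f Y)) := by
  have hGY : Integrable (fun ω => G ω * ‖Y ω‖) P := hG.integrable_mul hY.norm
  have hmean : Tendsto (fun n => ∫ ω, F n ω ∂P) atTop (𝓝 (∫ ω, f ω ∂P)) :=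
    tendsto_integral_of_dominated_convergence G hF (hG.integrable one_le_two) hFG hlim
  have hprod : Tendsto (fun n => ∫ ω, F n ω * Y ω ∂P) atTop (𝓝 (∫ ω, f ω * Y ω ∂P)) := by
    refine tendsto_integral_of_dominated_convergence _ (fun n => (hF n).mul hY.1) hGY
      (fun n => ?_) (hlim.mono fun ω hω => hω.mul_const (Y ω))
    filter_upwards [hFG n] with ω hω
    rw [norm_mul]
    exact mul_le_mul_of_nonneg_right hω (norm_nonneg _)
  exact hprod.sub (hmean.mul_const _)

theorem levyDynamic_cov_tendsto_zero_of_space_lag_general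
    {Ω : Type*} [MeasurableSpace Ω] (P : Measure Ω) [IsProbabilityMeasure P]
    (p : ℕ)
    (lam : NNReal) (τ : ℝ) (CK : ℝ)
    -- the Poisson counts
    (N : ℝ → Ω → ℕ) (hNmeas : ∀ t, Measurable (N t))
    (hNpois : ∀ t, P.map (N t) = poissonMeasure lam)
    -- the i.i.d. copies (over j) of the (ℝ^p × ℝ)-valued process (μ_{j,·}, β_{j,·})
    (Z : ℕ → Ω → ℝ → (Fin p → ℝ) × ℝ) (hZmeas : ∀ j, Measurable (Z j))
    (hZident : ∀ j, P.map (Z j) = P.map (Z 0))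
    -- the family (Z j)_j is independent of the family (N t)_t
    (hNZ : IndepFun (fun ω => fun t => N t ω) (fun ω => fun j => Z j ω) P)
    -- β_{0,t} is square integrable
    (hβsq : ∀ t : ℝ, MemLp (fun ω => (Z 0 ω t).2) 2 P)
    -- the random map M, independent of all of the above
    (M : Ω → (Fin p → ℝ) → (Fin p → ℝ)) (hMmeas : Measurable M)
    -- M acts componentwise via Mℓ
    (Mℓ : Ω → Fin p → ℝ → ℝ)
    (hMcomp : ∀ ω s ℓ, M ω s ℓ = Mℓ ω ℓ (s ℓ))
    -- almost surely, each component is nondecreasing and tends to +∞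
    (hMmono : ∀ᵐ ω ∂P, ∀ ℓ : Fin p,
      Monotone (Mℓ ω ℓ) ∧ Tendsto (Mℓ ω ℓ) atTop atTop)
    -- the kernel K, measurable, uniformly bounded by CK
    (K : (Fin p → ℝ) → ℝ → ℝ) (hKmeas : Measurable (Function.uncurry K))
    (hKbdd : ∀ x t, |K x t| ≤ CK)
    -- the hypothesis: K (x, t) → 0 as ‖x‖ → ∞, for every t
    (hK0 : ∀ t : ℝ, Tendsto (fun x => K x t)
      (Filter.comap (fun x : Fin p → ℝ => ‖x‖) atTop) (nhds 0))
    -- the conclusion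
    (t₁ t₂ : ℝ) (s₂ : Fin p → ℝ) (s₁ : ℕ → Fin p → ℝ)
    (hcoord : ∃ ℓ : Fin p, Tendsto (fun n => s₁ n ℓ) atTop atTop) :
    Tendsto (fun n =>
      covar P
        (fun ω => ∑ j ∈ Finset.range (N t₁ ω),
          K (M ω (s₁ n) - (Z j ω t₁).1) (t₁ - τ) * (Z j ω t₁).2)
        (fun ω => ∑ j ∈ Finset.range (N t₂ ω),
          K (M ω s₂ - (Z j ω t₂).1) (t₂ - τ) * (Z j ω t₂).2))
      atTop (nhds 0) := by
  set f : (Fin p → ℝ) → ℝ → Ω → ℝ := fun s t =>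
    randomSum (N t) fun j ω => K (M ω s - (Z j ω t).1) (t - τ) * (Z j ω t).2
  set G : ℝ → Ω → ℝ := fun t ω => CK * randomSum (N t) (fun j ω => |(Z j ω t).2|) ω
  have hf_meas (s t) : Measurable (f s t) :=
    measurable_randomSum (hNmeas t) fun j => by have := hZmeas j; fun_prop
  have hfG (s t ω) : |f s t ω| ≤ G t ω := abs_randomSum_mul_le (fun _ _ => hKbdd _ _) ω
  have hG (t) : MemLp (G t) 2 P := .const_mul (memLp_two_randomSum
    (X := fun j ω => |(Z j ω t).2|) (hNmeas t) (fun j => by fun_prop)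
    (hNZ.comp (φ := fun u : ℝ → ℕ => u t)
      (ψ := fun (z : ℕ → ℝ → (Fin p → ℝ) × ℝ) j => |(z j t).2|) (measurable_pi_apply t)
      (by fun_prop))
    (fun j => IdentDistrib.comp ⟨(hZmeas j).aemeasurable, (hZmeas 0).aemeasurable, hZident j⟩
      (by fun_prop : Measurable fun z : ℝ → (Fin p → ℝ) × ℝ => |(z t).2|))
    (memLp_two_natCast_of_map_eq_poissonMeasure (hNmeas t).aemeasurable (hNpois t))
    (hβsq t).abs) CK
  obtain ⟨ℓ, hℓ⟩ := hcoord
  have hlim : ∀ᵐ ω ∂P, Tendsto (fun n => f (s₁ n) t₁ ω) atTop (𝓝 0) := by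
    filter_upwards [hMmono] with ω hω
    have hcoordℓ (j) : Tendsto (fun n => (M ω (s₁ n) - (Z j ω t₁).1) ℓ) atTop atTop := by
      simpa only [Pi.sub_apply, hMcomp, sub_eq_add_neg, Function.comp_def] using
        tendsto_atTop_add_const_right _ _ ((hω ℓ).2.comp hℓ)
    simpa [f, randomSum] using tendsto_finsetSum (Finset.range (N t₁ ω)) fun j _ =>
      ((hK0 _).comp (tendsto_comap_norm_atTop_of_tendsto_apply (hcoordℓ j))).mul_const _
  have hY : MemLp (f s₂ t₂) 2 P := (hG t₂).of_le (hf_meas s₂ t₂).aestronglyMeasurable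
    (ae_of_all _ fun ω => (hfG s₂ t₂ ω).trans (Real.le_norm_self _))
  have hcov := tendsto_covar_of_dominated (fun n => (hf_meas _ _).aestronglyMeasurable)
    (hG t₁) hY (fun n => ae_of_all _ (hfG _ _)) hlim
  rwa [show covar P (fun _ => 0) (f s₂ t₂) = 0 by simp [covar]] at hcov

/-- **Lévy-dynamic process: lagged covariances vanish as a spatial coordinate tends to
infinity.** Suppose `K (x, t) → 0` as `‖x‖ → ∞` for every `t`, and that `M` acts
componentwise via almost surely nondecreasing maps `Mℓ (ω, ℓ, ·)` tending to `+∞`.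
Then for fixed times `t₁, t₂`, a fixed spatial point `s₂`, and a sequence `s₁ n` in which
at least one coordinate tends to `+∞`, one has `Cov (f (s₁ n, t₁), f (s₂, t₂)) → 0`,
where `f (s, t) = ∑_{j < N_t} K (M s - μ_{j,t}, t - τ) β_{j,t}`. -/
theorem levyDynamic_cov_tendsto_zero_of_space_lag
    {Ω : Type*} [MeasurableSpace Ω] (P : Measure Ω) [IsProbabilityMeasure P]
    (p : ℕ) (hp : 1 ≤ p)
    (lam : NNReal) (hlam : 0 < lam) (τ : ℝ) (CK : ℝ) (hCK : 0 < CK)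
    -- the Poisson counts
    (N : ℝ → Ω → ℕ) (hNmeas : ∀ t, Measurable (N t))
    (hNpois : ∀ t, P.map (N t) = poissonMeasure lam)
    (hNindep : iIndepFun (fun t : ℝ => N t) P)
    -- the i.i.d. copies (over j) of the (ℝ^p × ℝ)-valued process (μ_{j,·}, β_{j,·})
    (Z : ℕ → Ω → ℝ → (Fin p → ℝ) × ℝ) (hZmeas : ∀ j, Measurable (Z j))
    (hZindep : iIndepFun Z P)
    (hZident : ∀ j, P.map (Z j) = P.map (Z 0))
    -- the family (Z j)_j is independent of the family (N t)_t
    (hNZ : IndepFun (fun ω => fun t => N t ω) (fun ω => fun j => Z j ω) P)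
    -- for each j, the β-process is independent of the μ-process
    (hβμ : ∀ j, IndepFun (fun ω => fun t => (Z j ω t).2) (fun ω => fun t => (Z j ω t).1) P)
    -- the law of the pair (μ_{0,t}, β_{0,t}) does not depend on t
    (hstat : ∀ t₁ t₂ : ℝ,
      P.map (fun ω => Z 0 ω t₁) = P.map (fun ω => Z 0 ω t₂))
    -- β_{0,t} is square integrable
    (hβsq : ∀ t : ℝ, MemLp (fun ω => (Z 0 ω t).2) 2 P)
    -- the autocovariance of β depends only on the lag and vanishes at infinity
    (Cβ : ℝ → ℝ)
    (hCβ : ∀ t₁ t₂ : ℝ,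
      covar P (fun ω => (Z 0 ω t₁).2) (fun ω => (Z 0 ω t₂).2) = Cβ |t₁ - t₂|)
    (hCβ0 : Tendsto Cβ atTop (nhds 0))
    -- the random map M, independent of all of the above
    (M : Ω → (Fin p → ℝ) → (Fin p → ℝ)) (hMmeas : Measurable M)
    (hMindep : IndepFun M
      (fun ω => ((fun t => N t ω), fun j => Z j ω)) P)
    -- M acts componentwise via Mℓ
    (Mℓ : Ω → Fin p → ℝ → ℝ)
    (hMcomp : ∀ ω s ℓ, M ω s ℓ = Mℓ ω ℓ (s ℓ))
    -- almost surely, each component is nondecreasing and tends to +∞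
    (hMmono : ∀ᵐ ω ∂P, ∀ ℓ : Fin p,
      Monotone (Mℓ ω ℓ) ∧ Tendsto (Mℓ ω ℓ) atTop atTop)
    -- the kernel K, measurable, uniformly bounded by CK
    (K : (Fin p → ℝ) → ℝ → ℝ) (hKmeas : Measurable (Function.uncurry K))
    (hKbdd : ∀ x t, |K x t| ≤ CK)
    -- the hypothesis: K (x, t) → 0 as ‖x‖ → ∞, for every t
    (hK0 : ∀ t : ℝ, Tendsto (fun x => K x t)
      (Filter.comap (fun x : Fin p → ℝ => ‖x‖) atTop) (nhds 0))
    -- the conclusion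
    (t₁ t₂ : ℝ) (s₂ : Fin p → ℝ) (s₁ : ℕ → Fin p → ℝ)
    (hcoord : ∃ ℓ : Fin p, Tendsto (fun n => s₁ n ℓ) atTop atTop) :
    Tendsto (fun n =>
      covar P
        (fun ω => ∑ j ∈ Finset.range (N t₁ ω),
          K (M ω (s₁ n) - (Z j ω t₁).1) (t₁ - τ) * (Z j ω t₁).2)
        (fun ω => ∑ j ∈ Finset.range (N t₂ ω),
          K (M ω s₂ - (Z j ω t₂).1) (t₂ - τ) * (Z j ω t₂).2))
      atTop (nhds 0) :=
  levyDynamic_cov_tendsto_zero_of_space_lag_general P p lam τ CK N hNmeas hNpois Z hZmeas hZident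
    hNZ hβsq M hMmeas Mℓ hMcomp hMmono K hKmeas hKbdd hK0 t₁ t₂ s₂ s₁ hcoord
end

section
/- For all s₁, s₂ ∈ ℝ^p, Cov(f(s₁), f(s₂)) = λ · E[K(s₁ − μ₀) K(s₂ − μ₀) β₀²]. -/
/-!
Write `X_j = K (s₁ - μ_j) β_j`, `Y_j = K (s₂ - μ_j) β_j`. Because `N` is independent of the
sequence, conditioning on `N = n` turns the moments of the random sums into those of the
deterministic sums `∑_{j<n}`: `E[∑ X_j] = n E[X₀]` and, using independence of `X_j`, `Y_k` for
`j ≠ k`, `E[(∑ X_j)(∑ Y_k)] = n E[X₀ Y₀] + n (n - 1) E[X₀] E[Y₀]`. Averaging over the Poisson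
law with `E[N] = λ` and `E[N (N - 1)] = λ²`, the `λ²` term of the mixed moment cancels against
the product of the means, leaving `λ E[X₀ Y₀]`.
-/

open MeasureTheory ProbabilityTheory Filter

open Function
open scoped NNReal Nat

namespace ProbabilityTheory

section Poisson

lemma poissonMeasure_real_singleton_add_mul_descFactorial (r : ℝ≥0) (n k : ℕ) :
    Po(r).real {n + k} * (n + k).descFactorial k = r ^ k * Po(r).real {n} := by
  have hfact := Nat.factorial_mul_descFactorial (Nat.le_add_left k n)
  rw [Nat.add_sub_cancel] at hfact
  rw [poissonMeasure_real_singleton, poissonMeasure_real_singleton, ← hfact]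
  push_cast
  field_simp
  ring

lemma hasSum_poissonMeasure_real_mul_descFactorial (r : ℝ≥0) (k : ℕ) :
    HasSum (fun n ↦ Po(r).real {n} * n.descFactorial k) (r ^ k) := by
  refine (hasSum_nat_add_iff' k).mp ?_
  have hvanish : ∑ i ∈ Finset.range k, Po(r).real {i} * (i.descFactorial k : ℝ) = 0 :=
    Finset.sum_eq_zero fun i hi ↦ by
      simp [Nat.descFactorial_eq_zero_iff_lt.2 (Finset.mem_range.1 hi)]
  simp_rw [hvanish, sub_zero, poissonMeasure_real_singleton_add_mul_descFactorial]
  simpa [poissonMeasure_real_singleton] using (hasSum_one_poissonMeasure r).mul_left ((r : ℝ) ^ k)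

lemma integrable_descFactorial_poissonMeasure (r : ℝ≥0) (k : ℕ) :
    Integrable (fun n : ℕ ↦ (n.descFactorial k : ℝ)) Po(r) := by
  rw [integrable_poissonMeasure_iff]
  simpa [poissonMeasure_real_singleton] using
    (hasSum_poissonMeasure_real_mul_descFactorial r k).summable

lemma integral_descFactorial_poissonMeasure (r : ℝ≥0) (k : ℕ) :
    ∫ n, (n.descFactorial k : ℝ) ∂Po(r) = r ^ k := by
  rw [integral_poissonMeasure]
  simpa [poissonMeasure_real_singleton] using
    (hasSum_poissonMeasure_real_mul_descFactorial r k).tsum_eq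

variable {Ω : Type*} [MeasurableSpace Ω] {P : Measure Ω} {N : Ω → ℕ} {r : ℝ≥0}

lemma HasLaw.integrable_descFactorial_poisson (hN : HasLaw N Po(r) P) (k : ℕ) :
    Integrable (fun ω ↦ ((N ω).descFactorial k : ℝ)) P := by
  have h := integrable_descFactorial_poissonMeasure r k
  rw [← hN.map_eq] at h
  exact (integrable_map_measure .of_discrete hN.aemeasurable).1 h

lemma HasLaw.integral_descFactorial_poisson (hN : HasLaw N Po(r) P) (k : ℕ) :
    ∫ ω, ((N ω).descFactorial k : ℝ) ∂P = r ^ k :=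
  (hN.integral_comp .of_discrete).trans (integral_descFactorial_poissonMeasure r k)

end Poisson

section Independence

variable {Ω α β : Type*} [MeasurableSpace Ω] [MeasurableSpace α] [MeasurableSpace β]
  {P : Measure Ω} [IsFiniteMeasure P]

lemma IndepFun.integral_comp_eq_integral_integral {X : Ω → α} {Y : Ω → β} (hX : AEMeasurable X P)
    (hY : AEMeasurable Y P) (hXY : IndepFun X Y P) {F : α → β → ℝ} (hF : Measurable (uncurry F))
    (hF_int : ∀ x, Integrable (fun ω ↦ F x (Y ω)) P) {bound : α → ℝ}
    (hbound : Integrable (fun ω ↦ bound (X ω)) P) (hF_le : ∀ x, ∫ ω, |F x (Y ω)| ∂P ≤ bound x) :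
    ∫ ω, F (X ω) (Y ω) ∂P = ∫ ω, ∫ ω', F (X ω) (Y ω') ∂P ∂P := by
  have hlaw : P.map (fun ω ↦ (X ω, Y ω)) = (P.map X).prod (P.map Y) :=
    (indepFun_iff_map_prod_eq_prod_map_map hX hY).1 hXY
  have hF_Y : ∀ x, ∫ y, F x y ∂(P.map Y) = ∫ ω, F x (Y ω) ∂P := fun x ↦
    integral_map hY (hF.comp measurable_prodMk_left).aestronglyMeasurable
  have habs_Y : ∀ x, ∫ y, ‖uncurry F (x, y)‖ ∂(P.map Y) = ∫ ω, |F x (Y ω)| ∂P := fun x ↦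
    integral_map hY (hF.comp measurable_prodMk_left).norm.aestronglyMeasurable
  have hint : Integrable (uncurry F) ((P.map X).prod (P.map Y)) := by
    refine (integrable_prod_iff hF.aestronglyMeasurable).2 ⟨ae_of_all _ fun x ↦ ?_, ?_⟩
    · exact (integrable_map_measure (hF.comp measurable_prodMk_left).aestronglyMeasurable
        hY).2 (hF_int x)
    · have hmeas : StronglyMeasurable fun x ↦ ∫ y, ‖uncurry F (x, y)‖ ∂(P.map Y) :=
        hF.stronglyMeasurable.norm.integral_prod_right'
      refine (integrable_map_measure hmeas.aestronglyMeasurable hX).2 ?_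
      refine hbound.mono' (hmeas.aestronglyMeasurable.comp_aemeasurable hX)
        (ae_of_all _ fun ω ↦ ?_)
      rw [Function.comp_apply, Real.norm_of_nonneg (integral_nonneg fun _ ↦ norm_nonneg _),
        habs_Y]
      exact hF_le (X ω)
  calc ∫ ω, F (X ω) (Y ω) ∂P = ∫ z, uncurry F z ∂((P.map X).prod (P.map Y)) := by
        rw [← hlaw, integral_map (hX.prodMk hY) hF.aestronglyMeasurable]
        rfl
    _ = ∫ x, ∫ y, F x y ∂(P.map Y) ∂(P.map X) := integral_prod _ hint
    _ = ∫ ω, ∫ ω', F (X ω) (Y ω') ∂P ∂P := by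
        have hmeas : StronglyMeasurable fun x ↦ ∫ y, F x y ∂(P.map Y) :=
          hF.stronglyMeasurable.integral_prod_right
        rw [integral_map hX hmeas.aestronglyMeasurable]
        simp_rw [hF_Y]

end Independence

section RandomSum

variable {Ω E : Type*} [MeasurableSpace Ω] [MeasurableSpace E] {P : Measure Ω} {Z : ℕ → Ω → E}
  {g h : E → ℝ}

lemma integral_sum_range_comp_of_identDistrib (hident : ∀ j, IdentDistrib (Z j) (Z 0) P P)
    (hg : Measurable g) (hg_int : Integrable (fun ω ↦ g (Z 0 ω)) P) (n : ℕ) :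
    ∫ ω, ∑ j ∈ Finset.range n, g (Z j ω) ∂P = n * ∫ ω, g (Z 0 ω) ∂P := by
  have hid : ∀ j, IdentDistrib (fun ω ↦ g (Z j ω)) (fun ω ↦ g (Z 0 ω)) P P :=
    fun j ↦ (hident j).comp hg
  rw [integral_finsetSum _ fun j _ ↦ (hid j).integrable_iff.2 hg_int]
  simp [fun j ↦ (hid j).integral_eq]

lemma integrable_sum_range_mul_sum_range (hident : ∀ j, IdentDistrib (Z j) (Z 0) P P)
    (hg : Measurable g) (hh : Measurable h) (hg_L2 : MemLp (fun ω ↦ g (Z 0 ω)) 2 P)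
    (hh_L2 : MemLp (fun ω ↦ h (Z 0 ω)) 2 P) (n : ℕ) :
    Integrable (fun ω ↦ (∑ j ∈ Finset.range n, g (Z j ω)) * ∑ k ∈ Finset.range n, h (Z k ω)) P := by
  have hid : ∀ {f : E → ℝ}, Measurable f → ∀ j,
      IdentDistrib (fun ω ↦ f (Z j ω)) (fun ω ↦ f (Z 0 ω)) P P :=
    fun hf j ↦ (hident j).comp hf
  simp_rw [Finset.sum_mul_sum]
  exact integrable_finsetSum _ fun j _ ↦ integrable_finsetSum _ fun k _ ↦
    ((hid hg j).memLp_iff.2 hg_L2).integrable_mul ((hid hh k).memLp_iff.2 hh_L2)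

lemma integral_sum_range_mul_sum_range_of_indepFun (hident : ∀ j, IdentDistrib (Z j) (Z 0) P P)
    (hindep : Pairwise fun j k ↦ IndepFun (Z j) (Z k) P) (hg : Measurable g) (hh : Measurable h)
    (hg_L2 : MemLp (fun ω ↦ g (Z 0 ω)) 2 P) (hh_L2 : MemLp (fun ω ↦ h (Z 0 ω)) 2 P) (n : ℕ) :
    ∫ ω, (∑ j ∈ Finset.range n, g (Z j ω)) * ∑ k ∈ Finset.range n, h (Z k ω) ∂P
      = n * ∫ ω, g (Z 0 ω) * h (Z 0 ω) ∂P
        + n * (n - 1) * ((∫ ω, g (Z 0 ω) ∂P) * ∫ ω, h (Z 0 ω) ∂P) := by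
  have hid : ∀ {f : E → ℝ}, Measurable f → ∀ j,
      IdentDistrib (fun ω ↦ f (Z j ω)) (fun ω ↦ f (Z 0 ω)) P P :=
    fun hf j ↦ (hident j).comp hf
  set a := ∫ ω, g (Z 0 ω) * h (Z 0 ω) ∂P
  set b := (∫ ω, g (Z 0 ω) ∂P) * ∫ ω, h (Z 0 ω) ∂P
  have hg_L2' : ∀ j, MemLp (fun ω ↦ g (Z j ω)) 2 P := fun j ↦
    (hid hg j).memLp_iff.2 hg_L2
  have hh_L2' : ∀ k, MemLp (fun ω ↦ h (Z k ω)) 2 P := fun k ↦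
    (hid hh k).memLp_iff.2 hh_L2
  have hint : ∀ j k, Integrable (fun ω ↦ g (Z j ω) * h (Z k ω)) P := fun j k ↦
    (hg_L2' j).integrable_mul (hh_L2' k)
  have hterm : ∀ j k, ∫ ω, g (Z j ω) * h (Z k ω) ∂P = b + if j = k then a - b else 0 := by
    intro j k
    rcases eq_or_ne j k with rfl | hjk
    · simpa [a] using (hid (hg.mul hh) j).integral_eq
    · have hind : IndepFun (fun ω ↦ g (Z j ω)) (fun ω ↦ h (Z k ω)) P := (hindep hjk).comp hg hh
      rw [if_neg hjk, add_zero, hind.integral_fun_mul_eq_mul_integral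
        (hg_L2' j).aestronglyMeasurable (hh_L2' k).aestronglyMeasurable,
        (hid hg j).integral_eq, (hid hh k).integral_eq]
  simp_rw [Finset.sum_mul_sum]
  rw [integral_finsetSum _ fun j _ ↦ integrable_finsetSum _ fun k _ ↦ hint j k]
  simp_rw [integral_finsetSum _ fun k _ ↦ hint _ k, hterm, Finset.sum_add_distrib,
    Finset.sum_ite_eq, Finset.sum_ite_mem, Finset.inter_self]
  simp only [Finset.sum_const, Finset.card_range, nsmul_eq_mul]
  ring

lemma measurable_uncurry_sum_range (hg : Measurable g) :
    Measurable (uncurry fun n (v : ℕ → E) ↦ ∑ j ∈ Finset.range n, g (v j)) :=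
  measurable_from_prod_countable_right fun n ↦
    Finset.measurable_fun_sum (Finset.range n) fun j _ ↦ hg.comp (measurable_pi_apply j)

variable [IsProbabilityMeasure P] {N : Ω → ℕ}

lemma integral_sum_range_of_indepFun_nat (hN : AEMeasurable N P)
    (hNZ : IndepFun N (fun ω j ↦ Z j ω) P) (hident : ∀ j, IdentDistrib (Z j) (Z 0) P P)
    (hg : Measurable g) (hg_int : Integrable (fun ω ↦ g (Z 0 ω)) P)
    (hN_int : Integrable (fun ω ↦ (N ω : ℝ)) P) :
    ∫ ω, ∑ j ∈ Finset.range (N ω), g (Z j ω) ∂P = (∫ ω, (N ω : ℝ) ∂P) * ∫ ω, g (Z 0 ω) ∂P := by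
  have hid : ∀ j, IdentDistrib (fun ω ↦ g (Z j ω)) (fun ω ↦ g (Z 0 ω)) P P :=
    fun j ↦ (hident j).comp hg
  have hF_le : ∀ n : ℕ, ∫ ω, |∑ j ∈ Finset.range n, g (Z j ω)| ∂P
      ≤ n * ∫ ω, |g (Z 0 ω)| ∂P := fun n ↦ by
    rw [← integral_sum_range_comp_of_identDistrib hident hg.abs hg_int.abs n]
    refine integral_mono_of_nonneg (ae_of_all _ fun ω ↦ abs_nonneg _)
      (integrable_finsetSum _ fun j _ ↦ ((hid j).integrable_iff.2 hg_int).abs)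
      (ae_of_all _ fun ω ↦ Finset.abs_sum_le_sum_abs _ _)
  have hZ : AEMeasurable (fun ω j ↦ Z j ω) P :=
    aemeasurable_pi_lambda _ fun j ↦ (hident j).aemeasurable_fst
  rw [hNZ.integral_comp_eq_integral_integral hN hZ
    (measurable_uncurry_sum_range hg)
    (fun n ↦ integrable_finsetSum _ fun j _ ↦ (hid j).integrable_iff.2 hg_int)
    (hN_int.mul_const _) hF_le]
  simp_rw [integral_sum_range_comp_of_identDistrib hident hg hg_int]
  exact integral_mul_const _ _

lemma integral_sum_range_mul_sum_range_of_indepFun_nat (hN : AEMeasurable N P)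
    (hNZ : IndepFun N (fun ω j ↦ Z j ω) P)
    (hident : ∀ j, IdentDistrib (Z j) (Z 0) P P)
    (hindep : Pairwise fun j k ↦ IndepFun (Z j) (Z k) P) (hg : Measurable g) (hh : Measurable h)
    (hg_L2 : MemLp (fun ω ↦ g (Z 0 ω)) 2 P) (hh_L2 : MemLp (fun ω ↦ h (Z 0 ω)) 2 P)
    (hN_int : Integrable (fun ω ↦ (N ω : ℝ)) P)
    (hN₂_int : Integrable (fun ω ↦ (N ω : ℝ) * (N ω - 1)) P) :
    ∫ ω, (∑ j ∈ Finset.range (N ω), g (Z j ω)) * ∑ k ∈ Finset.range (N ω), h (Z k ω) ∂P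
      = (∫ ω, (N ω : ℝ) ∂P) * ∫ ω, g (Z 0 ω) * h (Z 0 ω) ∂P
        + (∫ ω, (N ω : ℝ) * (N ω - 1) ∂P) * ((∫ ω, g (Z 0 ω) ∂P) * ∫ ω, h (Z 0 ω) ∂P) := by
  have hprod_abs := integral_sum_range_mul_sum_range_of_indepFun hident hindep hg.abs hh.abs
    hg_L2.abs hh_L2.abs
  have hF_le : ∀ n : ℕ, ∫ ω, |(∑ j ∈ Finset.range n, g (Z j ω)) *
      ∑ k ∈ Finset.range n, h (Z k ω)| ∂P
      ≤ n * ∫ ω, |g (Z 0 ω)| * |h (Z 0 ω)| ∂P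
        + n * (n - 1) * ((∫ ω, |g (Z 0 ω)| ∂P) * ∫ ω, |h (Z 0 ω)| ∂P) := fun n ↦ by
    rw [← hprod_abs n]
    refine integral_mono_of_nonneg (ae_of_all _ fun ω ↦ abs_nonneg _)
      (integrable_sum_range_mul_sum_range hident hg.abs hh.abs hg_L2.abs hh_L2.abs n)
      (ae_of_all _ fun ω ↦ ?_)
    simp only [abs_mul]
    exact mul_le_mul (Finset.abs_sum_le_sum_abs _ _) (Finset.abs_sum_le_sum_abs _ _)
      (abs_nonneg _) (Finset.sum_nonneg fun _ _ ↦ abs_nonneg _)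
  have hF : Measurable (uncurry fun n (v : ℕ → E) ↦
      (∑ j ∈ Finset.range n, g (v j)) * ∑ k ∈ Finset.range n, h (v k)) :=
    (measurable_uncurry_sum_range hg).mul (measurable_uncurry_sum_range hh)
  have hZ : AEMeasurable (fun ω j ↦ Z j ω) P :=
    aemeasurable_pi_lambda _ fun j ↦ (hident j).aemeasurable_fst
  rw [hNZ.integral_comp_eq_integral_integral hN hZ hF
    (integrable_sum_range_mul_sum_range hident hg hh hg_L2 hh_L2)
    ((hN_int.mul_const _).add (hN₂_int.mul_const _)) hF_le]
  simp_rw [integral_sum_range_mul_sum_range_of_indepFun hident hindep hg hh hg_L2 hh_L2]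
  rw [integral_add (hN_int.mul_const _) (hN₂_int.mul_const _), integral_mul_const,
    integral_mul_const]

theorem covar_sum_range_of_hasLaw_poisson {r : ℝ≥0} (hN : HasLaw N Po(r) P)
    (hNZ : IndepFun N (fun ω j ↦ Z j ω) P) (hident : ∀ j, IdentDistrib (Z j) (Z 0) P P)
    (hindep : Pairwise fun j k ↦ IndepFun (Z j) (Z k) P) (hg : Measurable g) (hh : Measurable h)
    (hg_L2 : MemLp (fun ω ↦ g (Z 0 ω)) 2 P) (hh_L2 : MemLp (fun ω ↦ h (Z 0 ω)) 2 P) :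
    covar P (fun ω ↦ ∑ j ∈ Finset.range (N ω), g (Z j ω))
        (fun ω ↦ ∑ j ∈ Finset.range (N ω), h (Z j ω))
      = r * ∫ ω, g (Z 0 ω) * h (Z 0 ω) ∂P := by
  have hN_int : Integrable (fun ω ↦ (N ω : ℝ)) P := by
    simpa using hN.integrable_descFactorial_poisson 1
  have hN₂_int : Integrable (fun ω ↦ (N ω : ℝ) * (N ω - 1)) P := by
    simpa only [Nat.cast_descFactorial_two] using hN.integrable_descFactorial_poisson 2
  have hEN : ∫ ω, (N ω : ℝ) ∂P = r := by
    simpa using hN.integral_descFactorial_poisson 1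
  have hEN₂ : ∫ ω, (N ω : ℝ) * (N ω - 1) ∂P = r ^ 2 := by
    simpa only [Nat.cast_descFactorial_two] using hN.integral_descFactorial_poisson 2
  rw [covar, integral_sum_range_mul_sum_range_of_indepFun_nat hN.aemeasurable hNZ hident hindep
    hg hh hg_L2 hh_L2 hN_int hN₂_int]
  rw [integral_sum_range_of_indepFun_nat hN.aemeasurable hNZ hident hg
    (hg_L2.integrable one_le_two) hN_int]
  rw [integral_sum_range_of_indepFun_nat hN.aemeasurable hNZ hident hh
    (hh_L2.integrable one_le_two) hN_int, hEN, hEN₂]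
  ring

end RandomSum

end ProbabilityTheory

theorem levyField_cov_general
    {Ω : Type*} [MeasurableSpace Ω] (P : Measure Ω) [IsProbabilityMeasure P]
    (p : ℕ) (lam : NNReal)
    (N : Ω → ℕ) (hNmeas : Measurable N) (hNpois : P.map N = poissonMeasure lam)
    (μ : ℕ → Ω → (Fin p → ℝ)) (β : ℕ → Ω → ℝ)
    (hμβmeas : ∀ j, Measurable (fun ω => (μ j ω, β j ω)))
    (hiid : iIndepFun (fun j ω => (μ j ω, β j ω)) P)
    (hident : ∀ j, P.map (fun ω => (μ j ω, β j ω)) = P.map (fun ω => (μ 0 ω, β 0 ω)))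
    (hNindep : IndepFun N (fun ω => fun j => (μ j ω, β j ω)) P)
    (hβsq : MemLp (β 0) 2 P)
    (K : (Fin p → ℝ) → ℝ) (hKmeas : Measurable K) (hKbdd : ∃ C, ∀ x, |K x| ≤ C) :
    ∀ s₁ s₂ : Fin p → ℝ,
      covar P (fun ω => ∑ j ∈ Finset.range (N ω), K (s₁ - μ j ω) * β j ω)
              (fun ω => ∑ j ∈ Finset.range (N ω), K (s₂ - μ j ω) * β j ω)
        = (lam : ℝ) * ∫ ω, K (s₁ - μ 0 ω) * K (s₂ - μ 0 ω) * (β 0 ω) ^ 2 ∂P := by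
  obtain ⟨C, hC⟩ := hKbdd
  intro s₁ s₂
  have hg : ∀ s, Measurable fun q : (Fin p → ℝ) × ℝ ↦ K (s - q.1) * q.2 :=
    fun s ↦ (hKmeas.comp (measurable_const.sub measurable_fst)).mul measurable_snd
  have hg_L2 : ∀ s, MemLp (fun ω ↦ K (s - μ 0 ω) * β 0 ω) 2 P := fun s ↦
    hβsq.of_le_mul ((hg s).comp (hμβmeas 0)).aestronglyMeasurable (c := C)
      (ae_of_all _ fun ω ↦ by
        simpa [abs_mul] using mul_le_mul_of_nonneg_right (hC (s - μ 0 ω)) (abs_nonneg (β 0 ω)))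
  have hsq : (fun ω ↦ K (s₁ - μ 0 ω) * K (s₂ - μ 0 ω) * (β 0 ω) ^ 2)
      = fun ω ↦ K (s₁ - μ 0 ω) * β 0 ω * (K (s₂ - μ 0 ω) * β 0 ω) := funext fun ω ↦ by ring
  rw [hsq]
  exact covar_sum_range_of_hasLaw_poisson ⟨hNmeas.aemeasurable, hNpois⟩ hNindep
    (fun j ↦ ⟨(hμβmeas j).aemeasurable, (hμβmeas 0).aemeasurable, hident j⟩)
    (fun j k hjk ↦ hiid.indepFun hjk) (hg s₁) (hg s₂) (hg_L2 s₁) (hg_L2 s₂)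

/-- **Covariance of the Lévy random field at a fixed time.**
If `N ~ Poisson (λ)` is independent of the i.i.d. sequence `((μ_j, β_j))_j`, `E [β₀²] < ∞`
and `K` is bounded measurable, then for all `s₁, s₂`,
`Cov (f (s₁), f (s₂)) = λ * E [K (s₁ - μ₀) K (s₂ - μ₀) β₀²]`, where
`f (s) = ∑_{j < N} K (s - μ_j) β_j`. -/
theorem levyField_cov
    {Ω : Type*} [MeasurableSpace Ω] (P : Measure Ω) [IsProbabilityMeasure P]
    (p : ℕ) (hp : 1 ≤ p) (lam : NNReal) (hlam : 0 < lam)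
    (N : Ω → ℕ) (hNmeas : Measurable N) (hNpois : P.map N = poissonMeasure lam)
    (μ : ℕ → Ω → (Fin p → ℝ)) (β : ℕ → Ω → ℝ)
    (hμβmeas : ∀ j, Measurable (fun ω => (μ j ω, β j ω)))
    (hiid : iIndepFun (fun j ω => (μ j ω, β j ω)) P)
    (hident : ∀ j, P.map (fun ω => (μ j ω, β j ω)) = P.map (fun ω => (μ 0 ω, β 0 ω)))
    (hNindep : IndepFun N (fun ω => fun j => (μ j ω, β j ω)) P)
    (hβsq : MemLp (β 0) 2 P)
    (K : (Fin p → ℝ) → ℝ) (hKmeas : Measurable K) (hKbdd : ∃ C, ∀ x, |K x| ≤ C) :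
    ∀ s₁ s₂ : Fin p → ℝ,
      covar P (fun ω => ∑ j ∈ Finset.range (N ω), K (s₁ - μ j ω) * β j ω)
              (fun ω => ∑ j ∈ Finset.range (N ω), K (s₂ - μ j ω) * β j ω)
        = (lam : ℝ) * ∫ ω, K (s₁ - μ 0 ω) * K (s₂ - μ 0 ω) * (β 0 ω) ^ 2 ∂P :=
  levyField_cov_general P p lam N hNmeas hNpois μ β hμβmeas hiid hident hNindep hβsq K hKmeas hKbdd
end

section
/- For every real r ≥ 1 with E[|ξ₀|^r] < ∞, the r-th absolute moment of the compound Poisson sum is finite: E[(Σ_{j=0}^{N−1} |ξ_j|)^r] < ∞. -/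
/-!
Since `N` is independent of the `ξ_j`, the moment is the mixture
`∑ₙ P(N = n) E[(∑_{j<n} |ξ_j|)^r]`. By convexity of `t ↦ t^r`, the `n`-th term is at most
`P(N = n) nʳ E|ξ₀|^r`, and the Poisson law has finite moments of every order because
`nʳ ≤ rʳ eⁿ`.
-/

open MeasureTheory ProbabilityTheory
open scoped ENNReal NNReal

theorem Real.rpow_le_rpow_mul_exp {x r : ℝ} (hx : 0 ≤ x) (hr : 0 < r) :
    x ^ r ≤ r ^ r * Real.exp x := by
  have hx_le : x ≤ r * Real.exp (x / r) := by
    have := Real.add_one_le_exp (x / r)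
    rw [← div_le_iff₀' hr]
    linarith
  calc x ^ r ≤ (r * Real.exp (x / r)) ^ r := Real.rpow_le_rpow hx hx_le hr.le
    _ = r ^ r * Real.exp x := by
      rw [Real.mul_rpow hr.le (Real.exp_nonneg _), ← Real.exp_mul, div_mul_cancel₀ x hr.ne']

theorem integrable_rpow_poissonMeasure (lam : ℝ≥0) {r : ℝ} (hr : 0 < r) :
    Integrable (fun n : ℕ => (n : ℝ) ^ r) (poissonMeasure lam) := by
  rw [integrable_poissonMeasure_iff]
  refine .of_nonneg_of_le (fun n => by positivity) (fun n => ?_)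
    ((Real.summable_pow_div_factorial (Real.exp 1 * lam)).mul_left (r ^ r * Real.exp (-lam)))
  rw [Real.norm_of_nonneg (by positivity), mul_pow, Real.exp_one_pow]
  calc Real.exp (-lam) * lam ^ n / n.factorial * (n : ℝ) ^ r
      ≤ Real.exp (-lam) * lam ^ n / n.factorial * (r ^ r * Real.exp n) := by
        gcongr
        exact Real.rpow_le_rpow_mul_exp n.cast_nonneg hr
    _ = _ := by ring

theorem lintegral_rpow_poissonMeasure_lt_top (lam : ℝ≥0) {r : ℝ} (hr : 0 < r) :
    ∫⁻ n, (n : ℝ≥0∞) ^ r ∂poissonMeasure lam < ∞ := by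
  have := (integrable_rpow_poissonMeasure lam hr).hasFiniteIntegral
  unfold HasFiniteIntegral at this
  convert this using 3 with n
  rw [Real.enorm_rpow_of_nonneg n.cast_nonneg hr.le, Real.enorm_natCast]

theorem lintegral_comp_eq_lintegral_lintegral_of_indepFun
    {Ω α β : Type*} {mΩ : MeasurableSpace Ω} {mα : MeasurableSpace α} {mβ : MeasurableSpace β}
    {μ : Measure Ω} [IsFiniteMeasure μ] {X : Ω → α} {Y : Ω → β}
    (hX : Measurable X) (hY : Measurable Y) (hXY : IndepFun X Y μ)
    {f : α → β → ℝ≥0∞} (hf : Measurable (Function.uncurry f)) :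
    ∫⁻ ω, f (X ω) (Y ω) ∂μ = ∫⁻ y, ∫⁻ ω, f (X ω) y ∂μ ∂μ.map Y := by
  rw [indepFun_iff_map_prod_eq_prod_map_map hX.aemeasurable hY.aemeasurable] at hXY
  calc ∫⁻ ω, f (X ω) (Y ω) ∂μ = ∫⁻ p, Function.uncurry f p ∂μ.map fun ω => (X ω, Y ω) :=
        (lintegral_map hf (hX.prodMk hY)).symm
    _ = ∫⁻ y, ∫⁻ x, f x y ∂μ.map X ∂μ.map Y := by rw [hXY, lintegral_prod_symm' _ hf]; rfl
    _ = ∫⁻ y, ∫⁻ ω, f (X ω) y ∂μ ∂μ.map Y := by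
        congr 1 with y
        exact lintegral_map (hf.comp measurable_prodMk_right) hX

theorem lintegral_rpow_sum_le_card_rpow_mul
    {Ω ι : Type*} {mΩ : MeasurableSpace Ω} {μ : Measure Ω} {p : ℝ} (hp : 1 ≤ p)
    (s : Finset ι) {f : ι → Ω → ℝ≥0∞} (hf : ∀ i ∈ s, AEMeasurable (f i) μ) {M : ℝ≥0∞}
    (hM : ∀ i ∈ s, ∫⁻ ω, f i ω ^ p ∂μ ≤ M) :
    ∫⁻ ω, (∑ i ∈ s, f i ω) ^ p ∂μ ≤ (s.card : ℝ≥0∞) ^ p * M := by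
  calc ∫⁻ ω, (∑ i ∈ s, f i ω) ^ p ∂μ
      ≤ ∫⁻ ω, (s.card : ℝ≥0∞) ^ (p - 1) * ∑ i ∈ s, f i ω ^ p ∂μ :=
        lintegral_mono fun ω => ENNReal.rpow_sum_le_const_mul_sum_rpow s _ hp
    _ = (s.card : ℝ≥0∞) ^ (p - 1) * ∑ i ∈ s, ∫⁻ ω, f i ω ^ p ∂μ := by
        rw [lintegral_const_mul' _ _ (ENNReal.rpow_ne_top_of_nonneg (by linarith) (by simp)),
          lintegral_finsetSum' _ fun i hi => (hf i hi).pow_const p]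
    _ ≤ (s.card : ℝ≥0∞) ^ (p - 1) * (s.card * M) := by
        gcongr
        simpa using Finset.sum_le_sum hM
    _ = (s.card : ℝ≥0∞) ^ p * M := by
        rw [← mul_assoc]
        nth_rw 2 [← ENNReal.rpow_one (s.card : ℝ≥0∞)]
        rw [← ENNReal.rpow_add_of_nonneg _ _ (by linarith) zero_le_one, sub_add_cancel]

theorem Real.enorm_sum_abs {ι : Type*} (s : Finset ι) (x : ι → ℝ) :
    ‖∑ j ∈ s, |x j|‖ₑ = ∑ j ∈ s, ‖x j‖ₑ := by
  rw [Real.enorm_eq_ofReal (by positivity), ENNReal.ofReal_sum_of_nonneg fun j _ => abs_nonneg _]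
  simp_rw [Real.enorm_eq_ofReal_abs]

theorem compoundPoisson_rth_moment_finite_general
    {Ω : Type*} [MeasurableSpace Ω] (P : Measure Ω) [IsProbabilityMeasure P]
    (lam : NNReal)
    (N : Ω → ℕ) (hNmeas : Measurable N) (hNpois : P.map N = poissonMeasure lam)
    (ξ : ℕ → Ω → ℝ) (hmeas : ∀ j, Measurable (ξ j))
    (hident : ∀ j, P.map (ξ j) = P.map (ξ 0))
    (hindep : IndepFun (fun ω => fun j => ξ j ω) N P)
    (r : ℝ) (hr : 1 ≤ r)
    (hmom : Integrable (fun ω => |ξ 0 ω| ^ r) P) :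
    Integrable (fun ω => (∑ j ∈ Finset.range (N ω), |ξ j ω|) ^ r) P := by
  have hr0 : 0 < r := by linarith
  set M := ∫⁻ ω, ‖ξ 0 ω‖ₑ ^ r ∂P
  have hM : M < ∞ := by
    simpa [HasFiniteIntegral, Real.enorm_rpow_of_nonneg (abs_nonneg _) hr0.le] using hmom.2
  have hmoment (j : ℕ) : ∫⁻ ω, ‖ξ j ω‖ₑ ^ r ∂P = M :=
    (IdentDistrib.comp ⟨(hmeas j).aemeasurable, (hmeas 0).aemeasurable, hident j⟩
      (by fun_prop : Measurable fun x : ℝ => ‖x‖ₑ ^ r)).lintegral_eq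
  set G : (ℕ → ℝ) → ℕ → ℝ := fun x n => (∑ j ∈ Finset.range n, |x j|) ^ r
  have hG : Measurable (Function.uncurry G) :=
    measurable_from_prod_countable_left fun n =>
      (Finset.measurable_sum (Finset.range n) fun j _ => (measurable_pi_apply j).abs).pow_const r
  have hΞ : Measurable fun ω j => ξ j ω := measurable_pi_lambda _ hmeas
  refine ⟨(hG.comp (hΞ.prodMk hNmeas)).aestronglyMeasurable, ?_⟩
  calc ∫⁻ ω, ‖G (fun j => ξ j ω) (N ω)‖ₑ ∂P
      = ∫⁻ n, ∫⁻ ω, ‖G (fun j => ξ j ω) n‖ₑ ∂P ∂P.map N :=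
        lintegral_comp_eq_lintegral_lintegral_of_indepFun hΞ hNmeas hindep
          (f := fun x n => ‖G x n‖ₑ) hG.enorm
    _ ≤ ∫⁻ n, (n : ℝ≥0∞) ^ r * M ∂poissonMeasure lam := by
        rw [hNpois]
        refine lintegral_mono fun n => ?_
        simp only [G, Real.enorm_rpow_of_nonneg (Finset.sum_nonneg fun j _ => abs_nonneg _) hr0.le,
          Real.enorm_sum_abs]
        simpa using lintegral_rpow_sum_le_card_rpow_mul hr (Finset.range n)
          (fun j _ => (hmeas j).enorm.aemeasurable) fun j _ => (hmoment j).le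
    _ = (∫⁻ n, (n : ℝ≥0∞) ^ r ∂poissonMeasure lam) * M := lintegral_mul_const _ (by fun_prop)
    _ < ∞ := ENNReal.mul_lt_top (lintegral_rpow_poissonMeasure_lt_top lam hr0) hM

/-- **Finiteness of the `r`-th absolute moment of a compound Poisson sum.**
If `N ~ Poisson (λ)` is independent of the i.i.d. sequence `(ξ_j)_j` and `r ≥ 1` is a real
number with `E |ξ₀|^r < ∞`, then `E [(∑_{j < N} |ξ_j|)^r] < ∞`. -/
theorem compoundPoisson_rth_moment_finite
    {Ω : Type*} [MeasurableSpace Ω] (P : Measure Ω) [IsProbabilityMeasure P]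
    (lam : NNReal) (hlam : 0 < lam)
    (N : Ω → ℕ) (hNmeas : Measurable N) (hNpois : P.map N = poissonMeasure lam)
    (ξ : ℕ → Ω → ℝ) (hmeas : ∀ j, Measurable (ξ j))
    (hiid : iIndepFun ξ P)
    (hident : ∀ j, P.map (ξ j) = P.map (ξ 0))
    (hindep : IndepFun (fun ω => fun j => ξ j ω) N P)
    (r : ℝ) (hr : 1 ≤ r)
    (hmom : Integrable (fun ω => |ξ 0 ω| ^ r) P) :
    Integrable (fun ω => (∑ j ∈ Finset.range (N ω), |ξ j ω|) ^ r) P :=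
  compoundPoisson_rth_moment_finite_general P lam N hNmeas hNpois ξ hmeas hident hindep r hr hmom
end

section
/- For all indices k₁ ≥ k₂ ≥ 1, Cov(ζ_{t_{k₁}}, ζ_{t_{k₂}}) = σ² · ρ^{t_{k₁} − t_{k₂}} (real power); in particular the autocovariance of the IAR process at two observation times depends only on the lag between them, so the process is second-order weakly stationary. -/
/-!
Each `ζ (k + 1)` is `a * ζ k + b * ε (k + 1)` with `ε (k + 1)` independent of `ζ 0, ε 1, …, ε k`,
hence of every `ζ j` with `j ≤ k`. So a covariance with the past is multiplied by
`a = ρ ^ (t (k + 1) - t k)` at each step, and the variance map `v ↦ a² v + b²` with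
`b² = σ² (1 - a²)` fixes `σ²`. Multiplying the factors `ρ ^ Δ` along the way adds the lags.
-/

open MeasureTheory ProbabilityTheory Filter

section Covariance

variable {Ω : Type*} [MeasurableSpace Ω] {P : Measure Ω} {X E Z : Ω → ℝ}

lemma covar_eq_covariance [IsProbabilityMeasure P] (hX : MemLp X 2 P) (hZ : MemLp Z 2 P) :
    covar P X Z = cov[X, Z; P] :=
  (covariance_eq_sub hX hZ).symm

lemma covariance_const_mul_add_const_mul_left_of_indepFun [IsFiniteMeasure P] (a b : ℝ)
    (hX : MemLp X 2 P) (hE : MemLp E 2 P) (hZ : MemLp Z 2 P) (hEZ : IndepFun E Z P) :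
    cov[fun ω => a * X ω + b * E ω, Z; P] = a * cov[X, Z; P] := by
  rw [show (fun ω => a * X ω + b * E ω) = (fun ω => a * X ω) + fun ω => b * E ω from rfl,
    covariance_add_left (hX.const_mul a) (hE.const_mul b) hZ, covariance_const_mul_left,
    covariance_const_mul_left, hEZ.covariance_eq_zero hE hZ, mul_zero, add_zero]

lemma variance_const_mul_add_const_mul_of_indepFun (a b : ℝ)
    (hX : MemLp X 2 P) (hE : MemLp E 2 P) (hXE : IndepFun X E P) :
    Var[fun ω => a * X ω + b * E ω; P] = a ^ 2 * Var[X; P] + b ^ 2 * Var[E; P] := by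
  rw [show (fun ω => a * X ω + b * E ω) = (fun ω => a * X ω) + fun ω => b * E ω from rfl,
    IndepFun.variance_add (hX.const_mul a) (hE.const_mul b)
      (hXE.comp (measurable_const_mul a) (measurable_const_mul b)),
    variance_const_mul, variance_const_mul]

end Covariance

section LinearRecursion

variable {Ω : Type*} {a b : ℕ → ℝ} {ζ ε : ℕ → Ω → ℝ}

def initialAndInnovations (ζ₀ : Ω → ℝ) (ε : ℕ → Ω → ℝ) (m : ℕ) (ω : Ω) : ℝ × (Fin m → ℝ) :=
  (ζ₀ ω, fun j => ε (j.val + 1) ω)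

variable (hrec : ∀ k ω, ζ (k + 1) ω = a k * ζ k ω + b k * ε (k + 1) ω)
include hrec

lemma measurable_comap_initialAndInnovations [MeasurableSpace Ω] {k m : ℕ} (hkm : k ≤ m) :
    Measurable[MeasurableSpace.comap (initialAndInnovations (ζ 0) ε m) inferInstance] (ζ k) := by
  induction k with
  | zero => exact measurable_fst.comp (comap_measurable _)
  | succ k ih =>
    have hε : Measurable[MeasurableSpace.comap (initialAndInnovations (ζ 0) ε m) inferInstance]
        (ε (k + 1)) :=
      (measurable_pi_apply (⟨k, hkm⟩ : Fin m)).comp (measurable_snd.comp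
        (comap_measurable (initialAndInnovations (ζ 0) ε m)))
    rw [show ζ (k + 1) = fun ω => a k * ζ k ω + b k * ε (k + 1) ω from funext (hrec k)]
    exact ((ih (by omega)).const_mul _).add (hε.const_mul _)

variable [MeasurableSpace Ω] {P : Measure Ω}

lemma indepFun_innovation_of_le {k m : ℕ} (hkm : k ≤ m)
    (hindep : IndepFun (ε (m + 1)) (initialAndInnovations (ζ 0) ε m) P) :
    IndepFun (ε (m + 1)) (ζ k) P := by
  rw [IndepFun_iff_Indep] at hindep ⊢
  exact indep_of_indep_of_le_right hindep
    (measurable_comap_initialAndInnovations hrec hkm).comap_le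

lemma memLp_of_linear_recursion {p : ENNReal} (h0 : MemLp (ζ 0) p P)
    (hε : ∀ k, MemLp (ε (k + 1)) p P) (k : ℕ) : MemLp (ζ k) p P := by
  induction k with
  | zero => exact h0
  | succ k ih =>
    rw [show ζ (k + 1) = fun ω => a k * ζ k ω + b k * ε (k + 1) ω from funext (hrec k)]
    exact (ih.const_mul _).add ((hε k).const_mul _)

variable (h0 : MemLp (ζ 0) 2 P) (hε : ∀ k, MemLp (ε (k + 1)) 2 P)
  (hindep : ∀ m, IndepFun (ε (m + 1)) (initialAndInnovations (ζ 0) ε m) P)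
include h0 hε hindep

lemma variance_succ_of_linear_recursion (k : ℕ) :
    Var[ζ (k + 1); P] = a k ^ 2 * Var[ζ k; P] + b k ^ 2 * Var[ε (k + 1); P] := by
  rw [show ζ (k + 1) = fun ω => a k * ζ k ω + b k * ε (k + 1) ω from funext (hrec k)]
  exact variance_const_mul_add_const_mul_of_indepFun _ _
    (memLp_of_linear_recursion hrec h0 hε k) (hε k)
    (indepFun_innovation_of_le hrec le_rfl (hindep k)).symm

lemma covariance_succ_left_of_linear_recursion [IsFiniteMeasure P] {j k : ℕ} (hjk : j ≤ k) :
    cov[ζ (k + 1), ζ j; P] = a k * cov[ζ k, ζ j; P] := by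
  rw [show ζ (k + 1) = fun ω => a k * ζ k ω + b k * ε (k + 1) ω from funext (hrec k)]
  exact covariance_const_mul_add_const_mul_left_of_indepFun _ _
    (memLp_of_linear_recursion hrec h0 hε k) (hε k) (memLp_of_linear_recursion hrec h0 hε j)
    (indepFun_innovation_of_le hrec hjk (hindep k))

end LinearRecursion

section IAR

variable {Ω : Type*} [MeasurableSpace Ω] {P : Measure Ω} {σ ρ : ℝ} {t : ℕ → ℝ}
  {ζ ε : ℕ → Ω → ℝ}

lemma rpow_sq_mul_sq_add_sq_mul_sqrt_one_sub_rpow (hρ0 : 0 ≤ ρ) (hρ1 : ρ ≤ 1) {Δ : ℝ}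
    (hΔ : 0 ≤ Δ) : (ρ ^ Δ) ^ 2 * σ ^ 2 + (σ * √(1 - ρ ^ (2 * Δ))) ^ 2 = σ ^ 2 := by
  have hρ2Δ : ρ ^ (2 * Δ) ≤ 1 := Real.rpow_le_one hρ0 hρ1 (by positivity)
  rw [mul_pow, Real.sq_sqrt (by linarith), ← Real.rpow_mul_natCast hρ0, mul_comm Δ]
  push_cast
  ring

variable (hρ0 : 0 ≤ ρ) (hρ1 : ρ ≤ 1) (ht : Monotone t) (hζ0sq : MemLp (ζ 0) 2 P)
  (hεsq : ∀ k, MemLp (ε (k + 1)) 2 P)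
  (hζ0var : Var[ζ 0; P] = σ ^ 2) (hεvar : ∀ k, Var[ε (k + 1); P] = 1)
  (hεindep : ∀ m, IndepFun (ε (m + 1)) (initialAndInnovations (ζ 0) ε m) P)
  (hrec : ∀ k ω, ζ (k + 1) ω = ρ ^ (t (k + 1) - t k) * ζ k ω +
    σ * √(1 - ρ ^ (2 * (t (k + 1) - t k))) * ε (k + 1) ω)
include hρ0 hρ1 ht hζ0sq hεsq hζ0var hεvar hεindep hrec

lemma iar_variance (k : ℕ) : Var[ζ k; P] = σ ^ 2 := by
  induction k with
  | zero => exact hζ0var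
  | succ k ih =>
    rw [variance_succ_of_linear_recursion hrec hζ0sq hεsq hεindep k, ih, hεvar k, mul_one,
      rpow_sq_mul_sq_add_sq_mul_sqrt_one_sub_rpow hρ0 hρ1 (sub_nonneg.2 (ht k.le_succ))]

lemma iar_covariance [IsFiniteMeasure P] {j k : ℕ} (hjk : j ≤ k) :
    cov[ζ k, ζ j; P] = σ ^ 2 * ρ ^ (t k - t j) := by
  induction k, hjk using Nat.le_induction with
  | base =>
    rw [covariance_self (memLp_of_linear_recursion hrec hζ0sq hεsq j).aemeasurable,
      iar_variance hρ0 hρ1 ht hζ0sq hεsq hζ0var hεvar hεindep hrec, sub_self, Real.rpow_zero,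
      mul_one]
  | succ k hjk ih =>
    rw [covariance_succ_left_of_linear_recursion hrec hζ0sq hεsq hεindep hjk, ih,
      show t (k + 1) - t j = (t (k + 1) - t k) + (t k - t j) by ring,
      Real.rpow_add_of_nonneg hρ0 (sub_nonneg.2 (ht k.le_succ)) (sub_nonneg.2 (ht hjk))]
    ring

end IAR

theorem iar_autocovariance_general
    {Ω : Type*} [MeasurableSpace Ω] (P : Measure Ω) [IsProbabilityMeasure P]
    (σ ρ : ℝ) (hρ0 : 0 < ρ) (hρ1 : ρ < 1)
    (t : ℕ → ℝ) (ht : StrictMono t)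
    (ζ ε : ℕ → Ω → ℝ)
    (hζ0sq : MemLp (ζ 0) 2 P)
    (hζ0var : variance (ζ 0) P = σ ^ 2)
    (hεsq : ∀ k : ℕ, MemLp (ε (k + 1)) 2 P)
    (hεvar : ∀ k : ℕ, variance (ε (k + 1)) P = 1)
    (hεindep : ∀ k : ℕ,
      IndepFun (ε (k + 1)) (fun ω => (ζ 0 ω, fun j : Fin k => ε (j.val + 1) ω)) P)
    (hrec : ∀ (k : ℕ) (ω : Ω),
      ζ (k + 1) ω = ρ ^ (t (k + 1) - t k) * ζ k ω +
        σ * Real.sqrt (1 - ρ ^ (2 * (t (k + 1) - t k))) * ε (k + 1) ω) :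
    (∀ k₁ k₂ : ℕ, k₂ ≤ k₁ →
      covar P (ζ k₁) (ζ k₂) = σ ^ 2 * ρ ^ (t k₁ - t k₂)) ∧
    (∀ k₁ k₂ k₁' k₂' : ℕ, k₂ ≤ k₁ → k₂' ≤ k₁' → t k₁ - t k₂ = t k₁' - t k₂' →
      covar P (ζ k₁) (ζ k₂) = covar P (ζ k₁') (ζ k₂')) := by
  have hmem := memLp_of_linear_recursion hrec hζ0sq hεsq
  have hcov : ∀ k₁ k₂ : ℕ, k₂ ≤ k₁ → covar P (ζ k₁) (ζ k₂) = σ ^ 2 * ρ ^ (t k₁ - t k₂) :=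
    fun k₁ k₂ h => by
      rw [covar_eq_covariance (hmem k₁) (hmem k₂)]
      exact iar_covariance hρ0.le hρ1.le ht.monotone hζ0sq hεsq hζ0var hεvar hεindep hrec h
  exact ⟨hcov, fun k₁ k₂ k₁' k₂' h h' hlag => by rw [hcov _ _ h, hcov _ _ h', hlag]⟩

/-- **Autocovariance of the IAR process: weak second-order stationarity.**
Under the IAR recursion, for all indices `k₂ ≤ k₁`,
`Cov (ζ_{t k₁}, ζ_{t k₂}) = σ² * ρ^(t k₁ - t k₂)` (real power); in particular the
autocovariance at two observation times depends only on the lag between them. -/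
theorem iar_autocovariance
    {Ω : Type*} [MeasurableSpace Ω] (P : Measure Ω) [IsProbabilityMeasure P]
    (σ ρ : ℝ) (hσ : 0 < σ) (hρ0 : 0 < ρ) (hρ1 : ρ < 1)
    (t : ℕ → ℝ) (ht : StrictMono t)
    (ζ ε : ℕ → Ω → ℝ)
    (hζ0sq : MemLp (ζ 0) 2 P)
    (hζ0mean : ∫ ω, ζ 0 ω ∂P = 0)
    (hζ0var : variance (ζ 0) P = σ ^ 2)
    (hεsq : ∀ k : ℕ, MemLp (ε (k + 1)) 2 P)
    (hεmean : ∀ k : ℕ, ∫ ω, ε (k + 1) ω ∂P = 0)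
    (hεvar : ∀ k : ℕ, variance (ε (k + 1)) P = 1)
    (hεindep : ∀ k : ℕ,
      IndepFun (ε (k + 1)) (fun ω => (ζ 0 ω, fun j : Fin k => ε (j.val + 1) ω)) P)
    (hrec : ∀ (k : ℕ) (ω : Ω),
      ζ (k + 1) ω = ρ ^ (t (k + 1) - t k) * ζ k ω +
        σ * Real.sqrt (1 - ρ ^ (2 * (t (k + 1) - t k))) * ε (k + 1) ω) :
    (∀ k₁ k₂ : ℕ, k₂ ≤ k₁ →
      covar P (ζ k₁) (ζ k₂) = σ ^ 2 * ρ ^ (t k₁ - t k₂)) ∧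
    (∀ k₁ k₂ k₁' k₂' : ℕ, k₂ ≤ k₁ → k₂' ≤ k₁' → t k₁ - t k₂ = t k₁' - t k₂' →
      covar P (ζ k₁) (ζ k₂) = covar P (ζ k₁') (ζ k₂')) :=
  iar_autocovariance_general P σ ρ hρ0 hρ1 t ht ζ ε hζ0sq hζ0var hεsq hεvar hεindep hrec
end
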